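/- arXiv:1611.02466 — 13 statements merged into one kernel-verified Lean document; each statement's English description precedes it below -/
import Mathlib

section
/- The submonoid of ℤ₊² generated by (n,0), (1,1), (0,n) (written multiplicatively as t₁ⁿ, t₁t₂, t₂ⁿ) is normal: if z lies in the group of fractions of M and zᵗ ∈ M for some t > 0, then z ∈ M. -/
/-- The submonoid of `ℤ₊²` generated by `(n,0)`, `(1,1)`, `(0,n)` is normal:
if `z` lies in the group of fractions of `M` (the subgroup of `ℤ²` generated by `M`)
and `t • z ∈ M` for some `t > 0`, then `z ∈ M`. -/
theorem stmt0 (n : ℕ) (hn : 0 < n)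
    (M : AddSubmonoid (ℤ × ℤ))
    (hM : M = AddSubmonoid.closure {((n : ℤ), 0), (1, 1), (0, (n : ℤ))})
    (z : ℤ × ℤ) (hz : z ∈ AddSubgroup.closure (M : Set (ℤ × ℤ)))
    (t : ℕ) (ht : 0 < t) (htz : t • z ∈ M) :
    z ∈ M := by
  set s : Set (ℤ × ℤ) := {((n : ℤ), 0), (1, 1), (0, (n : ℤ))} with hs
  -- divisibility subgroup
  let G : AddSubgroup (ℤ × ℤ) :=
  { carrier := {p | (n : ℤ) ∣ p.1 - p.2}
    zero_mem' := by simp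
    add_mem' := by
      intro a b ha hb
      have := dvd_add ha hb
      simpa [add_sub_add_comm] using this
    neg_mem' := by
      intro a ha
      have h : (n : ℤ) ∣ -(a.1 - a.2) := dvd_neg.mpr ha
      show (n : ℤ) ∣ (-a).1 - (-a).2
      convert h using 1
      simp [neg_sub]
      ring }
  have hdvd : (n : ℤ) ∣ z.1 - z.2 := by
    have hMG : AddSubmonoid.closure s ≤ G.toAddSubmonoid := by
      rw [AddSubmonoid.closure_le]
      rintro q (rfl | rfl | rfl) <;> simp [G]
    have hle : AddSubgroup.closure (M : Set (ℤ × ℤ)) ≤ G := by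
      rw [AddSubgroup.closure_le]
      intro p hp
      rw [hM] at hp
      exact hMG hp
    exact hle hz
  -- nonnegativity
  let S : AddSubmonoid (ℤ × ℤ) :=
  { carrier := {p | 0 ≤ p.1 ∧ 0 ≤ p.2}
    zero_mem' := by simp
    add_mem' := fun ha hb => ⟨add_nonneg ha.1 hb.1, add_nonneg ha.2 hb.2⟩ }
  have hS : AddSubmonoid.closure s ≤ S := by
    rw [AddSubmonoid.closure_le]
    rintro q (rfl | rfl | rfl) <;> exact ⟨by positivity, by positivity⟩
  rw [hM] at htz
  have hzS : (0 : ℤ) ≤ (t • z).1 ∧ (0 : ℤ) ≤ (t • z).2 := hS htz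
  have ht' : (0 : ℤ) < t := by exact_mod_cast ht
  have hx : 0 ≤ z.1 := by
    have h1 : (0 : ℤ) ≤ (t : ℤ) * z.1 := by
      simpa [Prod.smul_def, zsmul_eq_mul] using hzS.1
    nlinarith
  have hy : 0 ≤ z.2 := by
    have h2 : (0 : ℤ) ≤ (t : ℤ) * z.2 := by
      simpa [Prod.smul_def, zsmul_eq_mul] using hzS.2
    nlinarith
  -- construct membership
  rw [hM]
  obtain ⟨k, hk⟩ := hdvd
  have hmem1 : ((n : ℤ), (0:ℤ)) ∈ AddSubmonoid.closure s :=
    AddSubmonoid.subset_closure (by simp [hs])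
  have hmem2 : ((1 : ℤ), (1:ℤ)) ∈ AddSubmonoid.closure s :=
    AddSubmonoid.subset_closure (by simp [hs])
  have hmem3 : ((0 : ℤ), (n:ℤ)) ∈ AddSubmonoid.closure s :=
    AddSubmonoid.subset_closure (by simp [hs])
  rcases le_total z.2 z.1 with hle | hle
  · have hk0 : 0 ≤ k := by nlinarith
    have : z = k.toNat • ((n : ℤ), (0:ℤ)) + z.2.toNat • ((1:ℤ), (1:ℤ)) := by
      have h1 : (k.toNat : ℤ) = k := Int.toNat_of_nonneg hk0
      have h2 : (z.2.toNat : ℤ) = z.2 := Int.toNat_of_nonneg hy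
      ext <;> simp [Prod.smul_def, nsmul_eq_mul, h1, h2] <;> linarith
    rw [this]
    exact AddSubmonoid.add_mem _ (AddSubmonoid.nsmul_mem _ hmem1 _)
      (AddSubmonoid.nsmul_mem _ hmem2 _)
  · have hk0 : k ≤ 0 := by nlinarith
    have : z = z.1.toNat • ((1:ℤ), (1:ℤ)) + (-k).toNat • ((0 : ℤ), (n:ℤ)) := by
      have h1 : ((-k).toNat : ℤ) = -k := Int.toNat_of_nonneg (by linarith)
      have h2 : (z.1.toNat : ℤ) = z.1 := Int.toNat_of_nonneg hx
      ext <;> simp [Prod.smul_def, nsmul_eq_mul, h1, h2] <;> linarith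
    rw [this]
    exact AddSubmonoid.add_mem _ (AddSubmonoid.nsmul_mem _ hmem2 _)
      (AddSubmonoid.nsmul_mem _ hmem3 _)
end

section
/- The submonoid of ℤ₊² generated by (2,0), (1,2), (0,2) is seminormal but not normal. -/
/-!
Membership in `M` is explicit: `(a, b) ∈ M` iff `a, b ≥ 0`, `b` is even, and `b ≥ 2` when `a` is
odd. If `2z` and `3z` lie in `M`, then `z` has nonnegative coordinates, its second coordinate is
even (as `3b` is), and when `a` is odd so is `3a`, forcing `3b ≥ 2` and hence `b ≥ 2`. Normality
fails at `z = (1, 0) = (1, 2) - (0, 2)`, for which `2z = (2, 0) ∈ M` but `z ∉ M`.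
-/

namespace SeminormalNotNormal

abbrev M : AddSubmonoid (ℤ × ℤ) := AddSubmonoid.closure {((2 : ℤ), 0), (1, 2), (0, 2)}

theorem mem_M_iff (p : ℤ × ℤ) :
    p ∈ M ↔ 0 ≤ p.1 ∧ 0 ≤ p.2 ∧ p.2 % 2 = 0 ∧ (p.1 % 2 = 1 → 2 ≤ p.2) := by
  constructor
  · intro hp
    induction hp using AddSubmonoid.closure_induction with
    | mem x hx => rcases hx with rfl | rfl | rfl <;> simp
    | zero => simp
    | add x y _ _ ihx ihy =>
      simp only [Prod.fst_add, Prod.snd_add]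
      omega
  · rintro ⟨h1, h2, h3, h4⟩
    have hgen : ∀ g ∈ ({((2 : ℤ), 0), (1, 2), (0, 2)} : Set (ℤ × ℤ)), g ∈ M :=
      fun g hg => AddSubmonoid.subset_closure hg
    set r := (p.1 % 2).toNat
    have hp : p = r • ((1 : ℤ), (2 : ℤ)) + (p.1 / 2).toNat • ((2 : ℤ), (0 : ℤ)) +
        ((p.2 - 2 * r) / 2).toNat • ((0 : ℤ), (2 : ℤ)) := by
      ext <;> simp [r] <;> omega
    rw [hp]
    exact add_mem (add_mem (nsmul_mem (hgen _ (by simp)) _) (nsmul_mem (hgen _ (by simp)) _))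
      (nsmul_mem (hgen _ (by simp)) _)

theorem mem_M_of_two_nsmul_of_three_nsmul (z : ℤ × ℤ) (h2 : 2 • z ∈ M) (h3 : 3 • z ∈ M) :
    z ∈ M := by
  rw [mem_M_iff] at h2 h3 ⊢
  simp only [Prod.smul_fst, Prod.smul_snd] at h2 h3
  simp only [nsmul_eq_mul, Nat.cast_ofNat] at h2 h3
  omega

theorem one_zero_mem_addSubgroupClosure :
    ((1 : ℤ), (0 : ℤ)) ∈ AddSubgroup.closure (M : Set (ℤ × ℤ)) := by
  have hsub : ((1 : ℤ), (0 : ℤ)) = ((1 : ℤ), (2 : ℤ)) - ((0 : ℤ), (2 : ℤ)) := by simp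
  rw [hsub]
  exact sub_mem (AddSubgroup.subset_closure ((mem_M_iff _).2 (by norm_num)))
    (AddSubgroup.subset_closure ((mem_M_iff _).2 (by norm_num)))

theorem two_nsmul_one_zero_mem : (2 : ℕ) • ((1 : ℤ), (0 : ℤ)) ∈ M := by
  rw [mem_M_iff]
  norm_num

theorem one_zero_not_mem : ((1 : ℤ), (0 : ℤ)) ∉ M := by
  rw [mem_M_iff]
  norm_num

end SeminormalNotNormal

/-- The submonoid of `ℤ₊²` generated by `(2,0)`, `(1,2)`, `(0,2)` is seminormal
but not normal. -/
theorem stmt1 (M : AddSubmonoid (ℤ × ℤ))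
    (hM : M = AddSubmonoid.closure {((2 : ℤ), 0), (1, 2), (0, 2)}) :
    (∀ z : ℤ × ℤ, z ∈ AddSubgroup.closure (M : Set (ℤ × ℤ)) →
      2 • z ∈ M → 3 • z ∈ M → z ∈ M) ∧
    ¬ (∀ z : ℤ × ℤ, z ∈ AddSubgroup.closure (M : Set (ℤ × ℤ)) →
      (∃ t : ℕ, 0 < t ∧ t • z ∈ M) → z ∈ M) := by
  subst hM
  refine ⟨fun z _ => SeminormalNotNormal.mem_M_of_two_nsmul_of_three_nsmul z, fun hnormal => ?_⟩
  exact SeminormalNotNormal.one_zero_not_mem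
    (hnormal _ SeminormalNotNormal.one_zero_mem_addSubgroupClosure
      ⟨2, two_pos, SeminormalNotNormal.two_nsmul_one_zero_mem⟩)
end

section
/- For j ≥ 3, the submonoid of ℤ₊² generated by (2,0), (1,j), (0,2) is not seminormal. -/
/-!
With `z = (1, j - 2)` we have `z = (1, j) - (0, 2)`, `2 • z = (2, 0) + (j - 2) • (0, 2)` and
`3 • z = (2, 0) + (1, j) + (j - 3) • (0, 2)`. But `z ∉ M`: a sum of generators with odd first
coordinate uses `(1, j)` at least once, so its second coordinate is at least `j`.
-/

def genMonoid (j : ℕ) : AddSubmonoid (ℤ × ℤ) :=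
  AddSubmonoid.closure {((2 : ℤ), 0), (1, (j : ℤ)), (0, 2)}

def oddFstBound (j : ℤ) : AddSubmonoid (ℤ × ℤ) where
  carrier := {w | 0 ≤ w.2 ∧ (Odd w.1 → j ≤ w.2)}
  zero_mem' := by simp
  add_mem' := by
    rintro ⟨a, b⟩ ⟨c, d⟩ ⟨hb, hab⟩ ⟨hd, hcd⟩
    simp only [Set.mem_ofPred_eq, Prod.mk_add_mk] at *
    refine ⟨add_nonneg hb hd, fun hodd => ?_⟩
    rcases Int.even_or_odd a with ha | ha
    · linarith [hcd (Int.odd_add'.mp hodd |>.mpr ha)]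
    · linarith [hab ha]

section

variable (j : ℕ)

theorem genMonoid_le_oddFstBound : genMonoid j ≤ oddFstBound j := by
  rw [genMonoid, AddSubmonoid.closure_le]
  rintro w (rfl | rfl | rfl) <;> simp [oddFstBound]

theorem one_sub_two_notMem_genMonoid : ((1 : ℤ), (j : ℤ) - 2) ∉ genMonoid j := fun hz =>
  absurd ((genMonoid_le_oddFstBound j hz).2 odd_one) (by simp)

theorem one_sub_two_mem_addSubgroupClosure_genMonoid :
    ((1 : ℤ), (j : ℤ) - 2) ∈ AddSubgroup.closure (genMonoid j : Set (ℤ × ℤ)) := by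
  have hmem (w) (hw : w ∈ ({((2 : ℤ), 0), (1, (j : ℤ)), (0, 2)} : Set (ℤ × ℤ))) :
      w ∈ AddSubgroup.closure (genMonoid j : Set (ℤ × ℤ)) :=
    AddSubgroup.subset_closure (AddSubmonoid.subset_closure hw)
  have := sub_mem (hmem (1, j) (by simp)) (hmem (0, 2) (by simp))
  simpa using this

theorem two_nsmul_one_sub_two_mem_genMonoid (hj : 2 ≤ j) :
    2 • ((1 : ℤ), (j : ℤ) - 2) ∈ genMonoid j := by
  have hsum : 2 • ((1 : ℤ), (j : ℤ) - 2) = ((2 : ℤ), 0) + (j - 2) • ((0 : ℤ), 2) := by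
    ext <;> simp [Nat.cast_sub hj]; ring
  rw [hsum]
  exact add_mem (AddSubmonoid.subset_closure (by simp))
    (nsmul_mem (AddSubmonoid.subset_closure (by simp)) _)

theorem three_nsmul_one_sub_two_mem_genMonoid (hj : 3 ≤ j) :
    3 • ((1 : ℤ), (j : ℤ) - 2) ∈ genMonoid j := by
  have hsum : 3 • ((1 : ℤ), (j : ℤ) - 2) =
      ((2 : ℤ), 0) + (1, (j : ℤ)) + (j - 3) • ((0 : ℤ), 2) := by
    ext <;> simp [Nat.cast_sub hj]; ring
  rw [hsum]
  exact add_mem (add_mem (AddSubmonoid.subset_closure (by simp))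
    (AddSubmonoid.subset_closure (by simp))) (nsmul_mem (AddSubmonoid.subset_closure (by simp)) _)

end

/-- For `j ≥ 3`, the submonoid of `ℤ₊²` generated by `(2,0)`, `(1,j)`, `(0,2)` is
not seminormal. -/
theorem stmt2 (j : ℕ) (hj : 3 ≤ j) (M : AddSubmonoid (ℤ × ℤ))
    (hM : M = AddSubmonoid.closure {((2 : ℤ), 0), (1, (j : ℤ)), (0, 2)}) :
    ¬ (∀ z : ℤ × ℤ, z ∈ AddSubgroup.closure (M : Set (ℤ × ℤ)) →
      2 • z ∈ M → 3 • z ∈ M → z ∈ M) := by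
  intro hseminormal
  subst hM
  exact one_sub_two_notMem_genMonoid j <| hseminormal _
    (one_sub_two_mem_addSubgroupClosure_genMonoid j)
    (two_nsmul_one_sub_two_mem_genMonoid j (by omega))
    (three_nsmul_one_sub_two_mem_genMonoid j hj)
end

section
/- The submonoid of ℤ₊² generated by (3,0), (1,2), (0,3) is not seminormal, and its seminormalization (inside its group of fractions) is the monoid generated by (3,0), (2,1), (1,2), (0,3). -/
/-- A submonoid `N` of `ℤ²` is seminormal if every `z` in its group of fractions
(the subgroup generated by `N`) with `2 • z ∈ N` and `3 • z ∈ N` lies in `N`. -/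
def IsSeminormalSubmonoid (N : AddSubmonoid (ℤ × ℤ)) : Prop :=
  ∀ z : ℤ × ℤ, z ∈ AddSubgroup.closure (N : Set (ℤ × ℤ)) →
    2 • z ∈ N → 3 • z ∈ N → z ∈ N

/-- Invariant monoid showing `(2,1) ∉ M`. -/
def Sinv : AddSubmonoid (ℤ × ℤ) where
  carrier := {p | 2 * (p.1 % 3) ≤ p.2}
  zero_mem' := by simp
  add_mem' := by
    rintro ⟨a, b⟩ ⟨c, d⟩ h1 h2
    simp only [Set.mem_setOf_eq, Prod.mk_add_mk] at *
    omega

/-- The cone `{(a,b) : 0 ≤ a, 0 ≤ b, 3 ∣ a + b}` as a submonoid. -/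
def Tcone : AddSubmonoid (ℤ × ℤ) where
  carrier := {p | 0 ≤ p.1 ∧ 0 ≤ p.2 ∧ 3 ∣ p.1 + p.2}
  zero_mem' := by simp
  add_mem' := by
    rintro ⟨a, b⟩ ⟨c, d⟩ h1 h2
    simp only [Set.mem_setOf_eq, Prod.mk_add_mk] at *
    omega

lemma mem0 (a b : ℤ) (ha : 0 ≤ a) (hb : 0 ≤ b) (h1 : (3:ℤ) ∣ a) (h2 : (3:ℤ) ∣ b) :
    (a, b) ∈ AddSubmonoid.closure {((3 : ℤ), 0), (2, 1), (1, 2), (0, 3)} := by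
  have key : (a, b) = (a / 3).toNat • ((3:ℤ), (0:ℤ)) + (b / 3).toNat • ((0:ℤ), (3:ℤ)) := by
    rw [Prod.ext_iff]
    simp only [Prod.smul_mk, Prod.mk_add_mk, nsmul_eq_mul]
    constructor <;> omega
  rw [key]
  exact add_mem
    (nsmul_mem (AddSubmonoid.subset_closure (by simp)) _)
    (nsmul_mem (AddSubmonoid.subset_closure (by simp)) _)

lemma mem_SN (a b : ℤ) (ha : 0 ≤ a) (hb : 0 ≤ b) (h3 : (3:ℤ) ∣ a + b) :
    (a, b) ∈ AddSubmonoid.closure {((3 : ℤ), 0), (2, 1), (1, 2), (0, 3)} := by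
  have hr : a % 3 = 0 ∨ a % 3 = 1 ∨ a % 3 = 2 := by omega
  rcases hr with h | h | h
  · exact mem0 a b ha hb (by omega) (by omega)
  · have : (a, b) = ((1:ℤ), (2:ℤ)) + (a - 1, b - 2) := by
      rw [Prod.ext_iff]; constructor <;> simp
    rw [this]
    exact add_mem (AddSubmonoid.subset_closure (by simp))
      (mem0 _ _ (by omega) (by omega) (by omega) (by omega))
  · have : (a, b) = ((2:ℤ), (1:ℤ)) + (a - 2, b - 1) := by
      rw [Prod.ext_iff]; constructor <;> simp
    rw [this]
    exact add_mem (AddSubmonoid.subset_closure (by simp))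
      (mem0 _ _ (by omega) (by omega) (by omega) (by omega))

/-- The submonoid of `ℤ₊²` generated by `(3,0)`, `(1,2)`, `(0,3)` is not seminormal,
and its seminormalization (the smallest seminormal submonoid of its group of fractions
containing it) is the submonoid generated by `(3,0)`, `(2,1)`, `(1,2)`, `(0,3)`. -/
theorem stmt3 (M SN : AddSubmonoid (ℤ × ℤ))
    (hM : M = AddSubmonoid.closure {((3 : ℤ), 0), (1, 2), (0, 3)})
    (hSN : SN = AddSubmonoid.closure {((3 : ℤ), 0), (2, 1), (1, 2), (0, 3)}) :
    ¬ IsSeminormalSubmonoid M ∧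
    IsSeminormalSubmonoid SN ∧
    M ≤ SN ∧
    (SN : Set (ℤ × ℤ)) ⊆ (AddSubgroup.closure (M : Set (ℤ × ℤ)) : Set (ℤ × ℤ)) ∧
    (∀ N : AddSubmonoid (ℤ × ℤ), M ≤ N →
      (N : Set (ℤ × ℤ)) ⊆ (AddSubgroup.closure (M : Set (ℤ × ℤ)) : Set (ℤ × ℤ)) →
      IsSeminormalSubmonoid N → SN ≤ N) := by
  subst hM hSN
  -- key memberships in M
  have h30 : ((3:ℤ), (0:ℤ)) ∈ AddSubmonoid.closure {((3 : ℤ), 0), (1, 2), (0, 3)} :=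
    AddSubmonoid.subset_closure (by simp)
  have h12 : ((1:ℤ), (2:ℤ)) ∈ AddSubmonoid.closure {((3 : ℤ), 0), (1, 2), (0, 3)} :=
    AddSubmonoid.subset_closure (by simp)
  have h03 : ((0:ℤ), (3:ℤ)) ∈ AddSubmonoid.closure {((3 : ℤ), 0), (1, 2), (0, 3)} :=
    AddSubmonoid.subset_closure (by simp)
  have h42 : ((4:ℤ), (2:ℤ)) ∈ AddSubmonoid.closure {((3 : ℤ), 0), (1, 2), (0, 3)} := by
    have : ((4:ℤ), (2:ℤ)) = ((3:ℤ), (0:ℤ)) + ((1:ℤ), (2:ℤ)) := by simp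
    rw [this]; exact add_mem h30 h12
  have h63 : ((6:ℤ), (3:ℤ)) ∈ AddSubmonoid.closure {((3 : ℤ), 0), (1, 2), (0, 3)} := by
    have : ((6:ℤ), (3:ℤ)) = ((3:ℤ), (0:ℤ)) + ((3:ℤ), (0:ℤ)) + ((0:ℤ), (3:ℤ)) := by simp
    rw [this]; exact add_mem (add_mem h30 h30) h03
  -- (2,1) in the group of fractions of M
  have h21grp : ((2:ℤ), (1:ℤ)) ∈ AddSubgroup.closure
      ((AddSubmonoid.closure {((3 : ℤ), 0), (1, 2), (0, 3)} : AddSubmonoid (ℤ × ℤ)) :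
        Set (ℤ × ℤ)) := by
    have e : ((2:ℤ), (1:ℤ)) = ((1:ℤ), (2:ℤ)) + ((1:ℤ), (2:ℤ)) - ((0:ℤ), (3:ℤ)) := by
      simp [Prod.ext_iff]
    rw [e]
    exact sub_mem (add_mem (AddSubgroup.subset_closure h12) (AddSubgroup.subset_closure h12))
      (AddSubgroup.subset_closure h03)
  -- (2,1) not in M
  have hMle : AddSubmonoid.closure {((3 : ℤ), 0), (1, 2), (0, 3)} ≤ Sinv := by
    rw [AddSubmonoid.closure_le]
    rintro p hp
    simp only [Set.mem_insert_iff, Set.mem_singleton_iff] at hp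
    rcases hp with rfl | rfl | rfl <;> simp [Sinv]
  have h21notM : ((2:ℤ), (1:ℤ)) ∉ AddSubmonoid.closure {((3 : ℤ), 0), (1, 2), (0, 3)} := by
    intro h
    have := hMle h
    simp [Sinv] at this
  -- M ≤ SN
  have hMSN : (AddSubmonoid.closure {((3 : ℤ), 0), (1, 2), (0, 3)} : AddSubmonoid (ℤ × ℤ)) ≤
      (AddSubmonoid.closure {((3 : ℤ), 0), (2, 1), (1, 2), (0, 3)} : AddSubmonoid (ℤ × ℤ)) := by
    apply AddSubmonoid.closure_le.mpr
    rintro p hp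
    apply AddSubmonoid.subset_closure
    simp only [Set.mem_insert_iff, Set.mem_singleton_iff] at hp ⊢
    tauto
  -- SN ≤ Tcone
  have hSNT : AddSubmonoid.closure {((3 : ℤ), 0), (2, 1), (1, 2), (0, 3)} ≤ Tcone := by
    rw [AddSubmonoid.closure_le]
    rintro p hp
    simp only [Set.mem_insert_iff, Set.mem_singleton_iff] at hp
    rcases hp with rfl | rfl | rfl | rfl <;> simp [Tcone]
  refine ⟨?_, ?_, hMSN, ?_, ?_⟩
  · -- not seminormal
    intro hs
    apply h21notM
    apply hs _ h21grp
    · have : (2 : ℕ) • ((2:ℤ), (1:ℤ)) = ((4:ℤ), (2:ℤ)) := by decide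
      rw [this]; exact h42
    · have : (3 : ℕ) • ((2:ℤ), (1:ℤ)) = ((6:ℤ), (3:ℤ)) := by decide
      rw [this]; exact h63
  · -- SN seminormal
    intro z _ h2 _
    have h2' := hSNT h2
    obtain ⟨z1, z2⟩ := z
    simp only [Tcone, Prod.smul_mk, nsmul_eq_mul, Nat.cast_ofNat, AddSubmonoid.mem_mk,
      AddSubsemigroup.mem_mk, Set.mem_setOf_eq] at h2'
    exact mem_SN z1 z2 (by omega) (by omega) (by omega)
  · -- SN ⊆ group of fractions of M
    have : AddSubmonoid.closure {((3 : ℤ), 0), (2, 1), (1, 2), (0, 3)} ≤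
        (AddSubgroup.closure
          ((AddSubmonoid.closure {((3 : ℤ), 0), (1, 2), (0, 3)} : AddSubmonoid (ℤ × ℤ)) :
            Set (ℤ × ℤ))).toAddSubmonoid := by
      rw [AddSubmonoid.closure_le]
      rintro p hp
      simp only [Set.mem_insert_iff, Set.mem_singleton_iff] at hp
      rcases hp with rfl | rfl | rfl | rfl
      · exact AddSubgroup.subset_closure h30
      · exact h21grp
      · exact AddSubgroup.subset_closure h12
      · exact AddSubgroup.subset_closure h03
    exact fun x hx => this hx
  · -- minimality
    intro N hMN _ hsem
    rw [AddSubmonoid.closure_le]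
    rintro p hp
    simp only [Set.mem_insert_iff, Set.mem_singleton_iff] at hp
    rcases hp with rfl | rfl | rfl | rfl
    · exact hMN h30
    · -- (2,1) via seminormality
      apply hsem
      · exact AddSubgroup.closure_mono (by exact_mod_cast hMN) h21grp
      · have : (2 : ℕ) • ((2:ℤ), (1:ℤ)) = ((4:ℤ), (2:ℤ)) := by decide
        rw [this]; exact hMN h42
      · have : (3 : ℕ) • ((2:ℤ), (1:ℤ)) = ((6:ℤ), (3:ℤ)) := by decide
        rw [this]; exact hMN h63
    · exact hMN h12
    · exact hMN h03
end

section
/- The submonoid M of ℤ₊³ generated by (2,0,0), (0,2,0), (0,0,2), (1,0,1), (0,1,1) is seminormal but not normal. -/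
/-!
`M` is cut out by inequalities and a parity condition: `z ∈ M` iff `z₀, z₁ ≥ 0`,
`z₀ + z₁ + z₂` is even, and `z₂` is at least the number `k` of odd coordinates among `z₀, z₁`
(each generator with an odd entry there also carries one unit of the third coordinate).
If `2z, 3z ∈ M`, then `z` has the parities of `3z`, so `z₀ + z₁ + z₂` is even and
`3 z₂ ≥ k`; since `z₂ ≡ k mod 2`, this forces `z₂ ≥ k`. On the other hand
`(1, 1, 0) = (1, 0, 1) + (0, 1, 1) - (0, 0, 2)` lies in the group and `2 • (1, 1, 0) ∈ M`,
but `(1, 1, 0) ∉ M`.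
-/

def generators : Set (Fin 3 → ℤ) :=
  {![2, 0, 0], ![0, 2, 0], ![0, 0, 2], ![1, 0, 1], ![0, 1, 1]}

def parityMonoid : AddSubmonoid (Fin 3 → ℤ) where
  carrier := {z | 0 ≤ z 0 ∧ 0 ≤ z 1 ∧ z 0 % 2 + z 1 % 2 ≤ z 2 ∧ (z 0 + z 1 + z 2) % 2 = 0}
  zero_mem' := by simp
  add_mem' := by
    intro x y
    simp only [Set.mem_ofPred_eq, Pi.add_apply]
    omega

theorem mem_parityMonoid {z : Fin 3 → ℤ} : z ∈ parityMonoid ↔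
    0 ≤ z 0 ∧ 0 ≤ z 1 ∧ z 0 % 2 + z 1 % 2 ≤ z 2 ∧ (z 0 + z 1 + z 2) % 2 = 0 :=
  Iff.rfl

theorem closure_generators_le : AddSubmonoid.closure generators ≤ parityMonoid := by
  rw [AddSubmonoid.closure_le]
  rintro z (rfl | rfl | rfl | rfl | rfl) <;> simp [mem_parityMonoid]

theorem zsmul_mem_closure_of_nonneg {A : Type*} [AddCommGroup A] {s : Set A} {g : A}
    (hg : g ∈ s) {n : ℤ} (hn : 0 ≤ n) : n • g ∈ AddSubmonoid.closure s := by
  lift n to ℕ using hn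
  rw [natCast_zsmul]
  exact AddSubmonoid.nsmul_mem _ (AddSubmonoid.subset_closure hg) n

theorem parityMonoid_le_closure : parityMonoid ≤ AddSubmonoid.closure generators := by
  rintro z ⟨h0, h1, h2, h3⟩
  have hz : z = (z 0 / 2) • ![2, 0, 0] + (z 1 / 2) • ![0, 2, 0] +
      ((z 2 - z 0 % 2 - z 1 % 2) / 2) • ![0, 0, 2] + (z 0 % 2) • ![1, 0, 1] +
      (z 1 % 2) • ![0, 1, 1] := by
    ext i; fin_cases i <;> simp <;> omega
  rw [hz]
  refine add_mem (add_mem (add_mem (add_mem ?_ ?_) ?_) ?_) ?_ <;>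
    exact zsmul_mem_closure_of_nonneg (by simp [generators]) (by omega)

theorem closure_generators_eq : AddSubmonoid.closure generators = parityMonoid :=
  le_antisymm closure_generators_le parityMonoid_le_closure

theorem mem_parityMonoid_of_two_nsmul_of_three_nsmul {z : Fin 3 → ℤ}
    (h₂ : 2 • z ∈ parityMonoid) (h₃ : 3 • z ∈ parityMonoid) : z ∈ parityMonoid := by
  simp only [mem_parityMonoid, Pi.smul_apply] at h₂ h₃ ⊢
  simp only [nsmul_eq_mul, Nat.cast_ofNat] at h₂ h₃
  omega

theorem not_normal_witness_parityMonoid :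
    ![1, 1, 0] ∈ AddSubgroup.closure (parityMonoid : Set (Fin 3 → ℤ)) ∧
      2 • ![1, 1, 0] ∈ parityMonoid ∧ ![1, 1, 0] ∉ parityMonoid := by
  refine ⟨?_, by simp [mem_parityMonoid], by simp [mem_parityMonoid]⟩
  have hsum : (![1, 1, 0] : Fin 3 → ℤ) = ![1, 0, 1] + ![0, 1, 1] - ![0, 0, 2] := by
    ext i; fin_cases i <;> rfl
  rw [hsum]
  refine sub_mem (add_mem ?_ ?_) ?_ <;>
    exact AddSubgroup.subset_closure (by simp [mem_parityMonoid])

/-- The submonoid of `ℤ₊³` generated by `(2,0,0)`, `(0,2,0)`, `(0,0,2)`, `(1,0,1)`,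
`(0,1,1)` is seminormal but not normal. -/
theorem stmt4 (M : AddSubmonoid (Fin 3 → ℤ))
    (hM : M = AddSubmonoid.closure
      {![2, 0, 0], ![0, 2, 0], ![0, 0, 2], ![1, 0, 1], ![0, 1, 1]}) :
    (∀ z : Fin 3 → ℤ, z ∈ AddSubgroup.closure (M : Set (Fin 3 → ℤ)) →
      2 • z ∈ M → 3 • z ∈ M → z ∈ M) ∧
    ¬ (∀ z : Fin 3 → ℤ, z ∈ AddSubgroup.closure (M : Set (Fin 3 → ℤ)) →
      (∃ t : ℕ, 0 < t ∧ t • z ∈ M) → z ∈ M) := by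
  obtain rfl : M = parityMonoid := hM.trans closure_generators_eq
  refine ⟨fun z _ ↦ mem_parityMonoid_of_two_nsmul_of_three_nsmul, fun hnormal ↦ ?_⟩
  obtain ⟨hgroup, htwo, hnot⟩ := not_normal_witness_parityMonoid
  exact hnot (hnormal _ hgroup ⟨2, two_pos, htwo⟩)
end

section
/- Let M ⊆ ℤ₊ʳ be the submonoid generated by all monomials t₁^{i₁}⋯t_r^{i_r} with i₁ + ⋯ + i_r = n (the n-th Veronese monoid). Then M is normal. -/
/-- Extraction lemma: from a nonnegative integer vector with sum ≥ n we can
extract a componentwise-smaller nonnegative vector with sum exactly n. -/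
lemma veronese_extract (r n : ℕ) (v : Fin r → ℤ) (h0 : ∀ i, 0 ≤ v i)
    (hs : (n : ℤ) ≤ ∑ i, v i) :
    ∃ w : Fin r → ℤ, (∀ i, 0 ≤ w i) ∧ (∀ i, w i ≤ v i) ∧ ∑ i, w i = (n : ℤ) := by
  induction n with
  | zero => exact ⟨0, fun i => le_refl 0, fun i => h0 i, by simp⟩
  | succ n ih =>
    obtain ⟨w, hw0, hwv, hws⟩ := ih (le_trans (by exact_mod_cast Nat.le_succ n) hs)
    have hex : ∃ i, w i < v i := by
      by_contra h
      push_neg at h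
      have hle : ∑ i, v i ≤ ∑ i, w i := Finset.sum_le_sum fun i _ => h i
      rw [hws] at hle
      have : (↑(n + 1) : ℤ) ≤ (n : ℤ) := le_trans hs hle
      push_cast at this; omega
    obtain ⟨i, hi⟩ := hex
    refine ⟨w + Pi.single i 1, ?_, ?_, ?_⟩
    · intro j
      rcases eq_or_ne j i with rfl | hj
      · simp; linarith [hw0 j]
      · simp [Pi.single_apply, hj, hw0 j]
    · intro j
      rcases eq_or_ne j i with rfl | hj
      · simpa using hi
      · simp [Pi.single_apply, hj, hwv j]
    · simp only [Pi.add_apply]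
      rw [Finset.sum_add_distrib, hws]
      rw [Finset.sum_eq_single i (fun b _ hb => Pi.single_eq_of_ne hb 1) (by simp),
        Pi.single_eq_same]
      push_cast
      ring

/-- A nonnegative vector whose sum is `k * n` lies in the Veronese monoid. -/
lemma veronese_mem (r n : ℕ) (k : ℕ) (v : Fin r → ℤ)
    (h0 : ∀ i, 0 ≤ v i) (hs : ∑ i, v i = (k : ℤ) * n) :
    v ∈ AddSubmonoid.closure {v : Fin r → ℤ | (∀ i, 0 ≤ v i) ∧ ∑ i, v i = (n : ℤ)} := by
  induction k generalizing v with
  | zero =>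
    have hv : v = 0 := by
      funext i
      have := (Finset.sum_eq_zero_iff_of_nonneg (fun j _ => h0 j)).1 (by simpa using hs)
      simpa using this i (Finset.mem_univ i)
    rw [hv]; exact AddSubmonoid.zero_mem _
  | succ k ih =>
    obtain ⟨w, hw0, hwv, hws⟩ := veronese_extract r n v h0 (by
      rw [hs]; push_cast; nlinarith [Nat.cast_nonneg (α := ℤ) k, Nat.cast_nonneg (α := ℤ) n])
    have hv : v = (v - w) + w := by funext j; simp
    rw [hv]
    refine AddSubmonoid.add_mem _ (ih (v - w) (fun i => by simp [sub_nonneg, hwv i]) ?_)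
      (AddSubmonoid.subset_closure ⟨hw0, hws⟩)
    simp only [Pi.sub_apply]
    rw [Finset.sum_sub_distrib, hs, hws]
    push_cast; ring

/-- The `n`-th Veronese monoid, the submonoid of `ℤ₊ʳ` generated by all
nonnegative vectors with coordinate sum `n`, is normal. -/
theorem stmt5 (n r : ℕ) (hn : 0 < n) (hr : 0 < r) (M : AddSubmonoid (Fin r → ℤ))
    (hM : M = AddSubmonoid.closure
      {v : Fin r → ℤ | (∀ i, 0 ≤ v i) ∧ ∑ i, v i = (n : ℤ)}) :
    ∀ z : Fin r → ℤ, z ∈ AddSubgroup.closure (M : Set (Fin r → ℤ)) →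
      (∃ t : ℕ, 0 < t ∧ t • z ∈ M) → z ∈ M := by
  subst hM
  set S : Set (Fin r → ℤ) := {v : Fin r → ℤ | (∀ i, 0 ≤ v i) ∧ ∑ i, v i = (n : ℤ)} with hS
  -- sum hom
  set f : (Fin r → ℤ) →+ ℤ :=
    { toFun := fun v => ∑ i, v i
      map_zero' := by simp
      map_add' := fun a b => by simp [Finset.sum_add_distrib] }
  -- every element of M has nonneg coords
  have hnonneg : ∀ v ∈ AddSubmonoid.closure S, ∀ i, 0 ≤ v i := by
    intro v hv
    refine AddSubmonoid.closure_induction (fun x hx => hx.1) (fun i => le_refl 0) ?_ hv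
    intro a b _ _ ha hb i
    simpa using add_nonneg (ha i) (hb i)
  -- every element of the group closure has sum divisible by n
  have hdvd : ∀ z ∈ AddSubgroup.closure ((AddSubmonoid.closure S : AddSubmonoid (Fin r → ℤ)) : Set (Fin r → ℤ)),
      (n : ℤ) ∣ ∑ i, z i := by
    intro z hz
    have hle : AddSubgroup.closure ((AddSubmonoid.closure S : AddSubmonoid (Fin r → ℤ)) : Set (Fin r → ℤ))
        ≤ (AddSubgroup.zmultiples (n : ℤ)).comap f := by
      rw [AddSubgroup.closure_le]
      intro v hv
      have : (n : ℤ) ∣ f v := by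
        refine AddSubmonoid.closure_induction (fun x hx => ?_) (by simp) ?_ hv
        · show (n : ℤ) ∣ ∑ i, x i
          rw [hx.2]
        · intro a b _ _ ha hb
          simpa using dvd_add ha hb
      show v ∈ AddSubgroup.comap f (AddSubgroup.zmultiples (n:ℤ))
      rw [AddSubgroup.mem_comap, Int.mem_zmultiples_iff]
      exact this
    have := hle hz
    simpa [AddSubgroup.mem_comap, Int.mem_zmultiples_iff, f] using this
  intro z hz ⟨t, ht, htz⟩
  have hz0 : ∀ i, 0 ≤ z i := by
    intro i
    have := hnonneg _ htz i
    have ht' : (0 : ℤ) < (t : ℤ) := by exact_mod_cast ht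
    have h2 : 0 ≤ (t : ℤ) * z i := by simpa using this
    nlinarith
  obtain ⟨m, hm⟩ := hdvd z hz
  have hm0 : 0 ≤ m := by
    have hsum : 0 ≤ ∑ i, z i := Finset.sum_nonneg fun i _ => hz0 i
    have hn' : (0 : ℤ) < (n : ℤ) := by exact_mod_cast hn
    nlinarith
  refine veronese_mem r n m.toNat z hz0 ?_
  rw [hm, Int.toNat_of_nonneg hm0]
  ring
end

section
/- Let R be a commutative ring, n and k₁,…,k_{r-1} positive integers, c_i = n·k_i + 1, and M ⊆ ℤ₊ʳ the monoid generated by all monomials of total degree n in t₁,…,t_r. Then the R[t_r]-algebra automorphism η of R[t₁,…,t_r] defined by η(t_i) = t_i + t_r^{c_i} for i = 1,…,r−1 maps the monoid algebra R[M] into itself. -/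
/-!
Give every variable weight `1` in `ZMod n`. A monomial lies in `M` exactly when its total
degree is divisible by `n`, so `R[M]` is the weight-`0` part of this `ZMod n`-grading. Since
`c i ≡ 1 (mod n)`, each `η t_i` is homogeneous of weight `1`, like `t_i` itself, so `η`
preserves the grading and in particular its weight-`0` part.
-/

open MvPolynomial

namespace Finsupp

variable {σ : Type*}

theorem mem_closure_setOf_degree_eq_iff {n : ℕ} {v : σ →₀ ℕ} :
    v ∈ AddSubmonoid.closure {v : σ →₀ ℕ | v.degree = n} ↔ n ∣ v.degree := by
  constructor
  · intro hv
    induction hv using AddSubmonoid.closure_induction with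
    | mem x hx => exact hx ▸ dvd_rfl
    | zero => simp
    | add x y _ _ hx hy => exact map_add degree x y ▸ dvd_add hx hy
  · rintro ⟨m, hm⟩
    induction m generalizing v with
    | zero => simp [(degree_eq_zero_iff v).mp hm]
    | succ m ih =>
      obtain ⟨a, hav, ha⟩ := exists_le_degree_eq v n (hm ▸ Nat.le_mul_of_pos_right n m.succ_pos)
      obtain ⟨b, rfl⟩ := exists_add_of_le hav
      refine add_mem (AddSubmonoid.subset_closure ha) (ih ?_)
      rw [map_add, ha, Nat.mul_succ] at hm
      omega

theorem weight_const_one {S : Type*} [Semiring S] (d : σ →₀ ℕ) :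
    weight (fun _ => (1 : S)) d = (d.degree : S) := by
  simp [weight_apply, degree_apply, Finsupp.sum]

end Finsupp

namespace MvPolynomial

variable {σ τ R S M : Type*} [CommSemiring R] [CommSemiring S] [Algebra R S] [AddCommMonoid M]

theorem IsWeightedHomogeneous.aeval {w : σ → M} {w' : τ → M} {φ : MvPolynomial σ R} {m : M}
    (hφ : φ.IsWeightedHomogeneous w m) {g : σ → MvPolynomial τ S}
    (hg : ∀ i, (g i).IsWeightedHomogeneous w' (w i)) :
    (aeval g φ).IsWeightedHomogeneous w' m := by
  rw [aeval_def, eval₂_eq]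
  refine IsWeightedHomogeneous.sum _ _ _ fun d hd => ?_
  rw [← zero_add m, ← hφ (mem_support_iff.mp hd), Finsupp.weight_apply, Finsupp.sum]
  exact (isWeightedHomogeneous_C w' _).mul
    (IsWeightedHomogeneous.prod _ _ _ fun i _ => (hg i).pow (d i))

theorem restrictSupport_setOf_dvd_degree (n : ℕ) :
    restrictSupport R {d : σ →₀ ℕ | n ∣ d.degree} =
      weightedHomogeneousSubmodule R (fun _ => (1 : ZMod n)) 0 := by
  rw [weightedHomogeneousSubmodule_eq_finsupp_supported]
  simp only [Finsupp.weight_const_one, ZMod.natCast_eq_zero_iff]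
  rfl

end MvPolynomial

theorem stmt6_general (R : Type*) [CommRing R] (n r : ℕ)
    (c k : Fin (r + 1) → ℕ) (hc : ∀ i, c i = n * k i + 1)
    (M : AddSubmonoid ((Fin (r + 1)) →₀ ℕ))
    (hM : M = AddSubmonoid.closure {v : (Fin (r + 1)) →₀ ℕ | ∑ i, v i = n})
    (RM : Submodule R (MvPolynomial (Fin (r + 1)) R))
    (hRM : RM = Submodule.span R
      {p : MvPolynomial (Fin (r + 1)) R | ∃ v ∈ M, p = monomial v (1 : R)})
    (η : MvPolynomial (Fin (r + 1)) R →ₐ[R] MvPolynomial (Fin (r + 1)) R)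
    (hη : η = aeval (fun i => if i = Fin.last r then X i
      else X i + (X (Fin.last r) : MvPolynomial (Fin (r + 1)) R) ^ (c i))) :
    ∀ p ∈ RM, η p ∈ RM := by
  have hRM' : RM = weightedHomogeneousSubmodule R (fun _ => (1 : ZMod n)) 0 := by
    simp_rw [hRM, hM, ← Finsupp.degree_eq_sum, ← restrictSupport_setOf_dvd_degree,
      restrictSupport_eq_span, Finsupp.mem_closure_setOf_degree_eq_iff]
    congr 1
    ext p
    simp [eq_comm]
  have hX : ∀ i, (if i = Fin.last r then X i
      else X i + (X (Fin.last r) : MvPolynomial (Fin (r + 1)) R) ^ (c i)).IsWeightedHomogeneous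
        (fun _ => (1 : ZMod n)) 1 := by
    intro i
    split_ifs
    · exact isWeightedHomogeneous_X R _ i
    · refine (isWeightedHomogeneous_X R _ i).add ?_
      convert (isWeightedHomogeneous_X R (fun _ => (1 : ZMod n)) (Fin.last r)).pow (c i)
      simp [hc]
  rw [hRM', hη]
  exact fun p hp => hp.aeval hX

/-- Let `M ⊆ ℤ₊^{r+1}` be the monoid generated by all exponent vectors of total
degree `n` (the Veronese monoid), and let `c i = n * k i + 1` with `k i > 0`.
Then the `R`-algebra endomorphism `η` of `R[t₀,…,t_r]` fixing the last variable
and sending `t_i ↦ t_i + t_r ^ (c i)` for the other variables maps the monoid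
algebra `R[M]` (the `R`-span of the monomials with exponents in `M`) into itself. -/
theorem stmt6 (R : Type*) [CommRing R] (n r : ℕ) (hn : 0 < n)
    (c k : Fin (r + 1) → ℕ) (hk : ∀ i, 0 < k i) (hc : ∀ i, c i = n * k i + 1)
    (M : AddSubmonoid ((Fin (r + 1)) →₀ ℕ))
    (hM : M = AddSubmonoid.closure {v : (Fin (r + 1)) →₀ ℕ | ∑ i, v i = n})
    (RM : Submodule R (MvPolynomial (Fin (r + 1)) R))
    (hRM : RM = Submodule.span R
      {p : MvPolynomial (Fin (r + 1)) R | ∃ v ∈ M, p = monomial v (1 : R)})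
    (η : MvPolynomial (Fin (r + 1)) R →ₐ[R] MvPolynomial (Fin (r + 1)) R)
    (hη : η = aeval (fun i => if i = Fin.last r then X i
      else X i + (X (Fin.last r) : MvPolynomial (Fin (r + 1)) R) ^ (c i))) :
    ∀ p ∈ RM, η p ∈ RM :=
  stmt6_general R n r c k hc M hM RM hRM η hη
end

section
/- Let R be a commutative ring and k₁, k₂ > 1 integers with c_j = 2k_j − 1. Let M ⊆ ℤ₊³ be the monoid generated by t₁², t₂², t₃², t₁t₃, t₂t₃. Then the R-algebra automorphism η of R[t₁,t₂,t₃] defined by η(t_j) = t_j + t₃^{c_j} for j = 1,2 and η(t₃) = t₃ restricts to an automorphism of R[M]. -/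
/-!
`R[M]` is the subalgebra generated by the five monomials `t₁², t₂², t₃², t₁t₃, t₂t₃`, so an
algebra endomorphism preserves it as soon as it maps these five into it. For the substitution
`t_j ↦ t_j + r t₃^{c_j}` with `c_j` odd, every monomial that appears in the images is in `M`:
`t_j t₃^{c_j} = (t_j t₃)(t₃²)^{(c_j - 1)/2}`, while `t₃^{c_j + 1}` and `t₃^{2c_j}` are powers
of `t₃²`. Taking `r = ±1` gives `η` and its inverse `η'`.
-/

open MvPolynomial

namespace MvPolynomial

variable {σ R : Type*} [CommSemiring R]

theorem setOf_monomial_one_closure_eq_closure (G : Set (σ →₀ ℕ)) :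
    {p : MvPolynomial σ R | ∃ v ∈ AddSubmonoid.closure G, p = monomial v 1} =
      Submonoid.closure ((monomial · (1 : R)) '' G) := by
  ext p
  constructor
  · rintro ⟨v, hv, rfl⟩
    induction hv using AddSubmonoid.closure_induction with
    | mem v hv => exact Submonoid.subset_closure ⟨v, hv, rfl⟩
    | zero => simp
    | add v w _ _ hv hw => simpa [monomial_mul] using Submonoid.mul_mem _ hv hw
  · intro hp
    induction hp using Submonoid.closure_induction with
    | mem p hp =>
      obtain ⟨v, hv, rfl⟩ := hp
      exact ⟨v, AddSubmonoid.subset_closure hv, rfl⟩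
    | one => exact ⟨0, zero_mem _, by simp⟩
    | mul p q _ _ hp hq =>
      obtain ⟨v, hv, rfl⟩ := hp
      obtain ⟨w, hw, rfl⟩ := hq
      exact ⟨v + w, add_mem hv hw, by simp [monomial_mul]⟩

theorem span_monomial_one_closure_eq_adjoin (G : Set (σ →₀ ℕ)) :
    Submodule.span R {p : MvPolynomial σ R | ∃ v ∈ AddSubmonoid.closure G, p = monomial v 1} =
      Subalgebra.toSubmodule (Algebra.adjoin R ((monomial · (1 : R)) '' G)) := by
  rw [Algebra.adjoin_eq_span, setOf_monomial_one_closure_eq_closure]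

end MvPolynomial

theorem AlgHom.apply_mem_adjoin {R A : Type*} [CommSemiring R] [Semiring A] [Algebra R A]
    {s : Set A} (φ : A →ₐ[R] A) (hs : ∀ x ∈ s, φ x ∈ Algebra.adjoin R s) {p : A}
    (hp : p ∈ Algebra.adjoin R s) : φ p ∈ Algebra.adjoin R s := by
  have : (Algebra.adjoin R s).map φ ≤ Algebra.adjoin R s := by
    rw [← Algebra.adjoin_image, Algebra.adjoin_le_iff]
    rintro _ ⟨x, hx, rfl⟩
    exact hs x hx
  exact this ⟨p, hp, rfl⟩

theorem mul_pow_odd_mem {A S : Type*} [CommMonoid A] [SetLike S A] [SubmonoidClass S A] {s : S}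
    {x y : A} (hxy : x * y ∈ s) (hy : y ^ 2 ∈ s) {n : ℕ} (hn : Odd n) : x * y ^ n ∈ s := by
  obtain ⟨m, rfl⟩ := hn
  rw [pow_add, pow_mul, pow_one, mul_comm (_ ^ m), ← mul_assoc]
  exact mul_mem hxy (pow_mem hy m)

section Subalgebra

variable {R A : Type*} [CommSemiring R] [CommSemiring A] [Algebra R A] {S : Subalgebra R A}
  {x z : A} {n : ℕ}

theorem Subalgebra.add_smul_pow_sq_mem (hx : x ^ 2 ∈ S) (hz : z ^ 2 ∈ S) (hxz : x * z ∈ S)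
    (hn : Odd n) (r : R) : (x + r • z ^ n) ^ 2 ∈ S := by
  have hsq : (x + r • z ^ n) ^ 2 = x ^ 2 + (2 * r) • (x * z ^ n) + r ^ 2 • (z ^ 2) ^ n := by
    simp only [Algebra.smul_def, map_mul, map_pow, map_ofNat]; ring
  rw [hsq]
  exact add_mem (add_mem hx (S.smul_mem (mul_pow_odd_mem hxz hz hn) _))
    (S.smul_mem (pow_mem hz n) _)

theorem Subalgebra.add_smul_pow_mul_mem (hz : z ^ 2 ∈ S) (hxz : x * z ∈ S) (hn : Odd n)
    (r : R) : (x + r • z ^ n) * z ∈ S := by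
  obtain ⟨m, rfl⟩ := hn
  have hmul : (x + r • z ^ (2 * m + 1)) * z = x * z + r • (z ^ 2) ^ (m + 1) := by
    simp only [Algebra.smul_def]; ring
  rw [hmul]
  exact add_mem hxz (S.smul_mem (pow_mem hz _) _)

end Subalgebra

namespace MvPolynomial

variable (R : Type*) [CommRing R]

/-- `R[M]`, presented by the monomials of the generators of `M`. -/
noncomputable def monomialSubalgebra : Subalgebra R (MvPolynomial (Fin 3) R) :=
  Algebra.adjoin R {X 0 ^ 2, X 1 ^ 2, X 2 ^ 2, X 0 * X 2, X 1 * X 2}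

theorem span_monomial_one_eq_monomialSubalgebra :
    Submodule.span R {p : MvPolynomial (Fin 3) R | ∃ v ∈ AddSubmonoid.closure
      {Finsupp.single 0 2, Finsupp.single 1 2, Finsupp.single 2 2,
       Finsupp.single 0 1 + Finsupp.single 2 1, Finsupp.single 1 1 + Finsupp.single 2 1},
      p = monomial v 1} = Subalgebra.toSubmodule (monomialSubalgebra R) := by
  rw [span_monomial_one_closure_eq_adjoin]
  congr
  simp only [Set.image_insert_eq, Set.image_singleton, X_pow_eq_monomial, monomial_single_add,
    pow_one]
  rfl

variable {R} (r : R) (c : Fin 2 → ℕ)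

noncomputable def triangularSubst : Fin 3 → MvPolynomial (Fin 3) R :=
  fun i => if h : (i : ℕ) < 2 then X i + r • X 2 ^ c ⟨i, h⟩ else X i

@[simp]
theorem triangularSubst_zero : triangularSubst r c 0 = X 0 + r • X 2 ^ c 0 :=
  rfl

@[simp]
theorem triangularSubst_one : triangularSubst r c 1 = X 1 + r • X 2 ^ c 1 :=
  rfl

@[simp]
theorem triangularSubst_two : triangularSubst r c 2 = X 2 :=
  rfl

theorem aeval_triangularSubst_neg_comp :
    (aeval (triangularSubst (-r) c)).comp (aeval (triangularSubst r c)) = AlgHom.id R _ := by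
  apply algHom_ext
  intro i
  fin_cases i <;> simp

variable {c} in
theorem aeval_triangularSubst_mem (hc : ∀ j, Odd (c j))
    {p : MvPolynomial (Fin 3) R} (hp : p ∈ monomialSubalgebra R) :
    aeval (triangularSubst r c) p ∈ monomialSubalgebra R := by
  have hgen {q} (hq : q ∈ ({X 0 ^ 2, X 1 ^ 2, X 2 ^ 2, X 0 * X 2, X 1 * X 2} :
      Set (MvPolynomial (Fin 3) R))) : q ∈ monomialSubalgebra R := Algebra.subset_adjoin hq
  refine AlgHom.apply_mem_adjoin _ (fun q hq => ?_) hp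
  rcases hq with rfl | rfl | rfl | rfl | rfl <;>
    simp only [map_pow, map_mul, aeval_X, triangularSubst_zero, triangularSubst_one,
      triangularSubst_two]
  · exact Subalgebra.add_smul_pow_sq_mem (hgen (by simp)) (hgen (by simp)) (hgen (by simp))
      (hc 0) r
  · exact Subalgebra.add_smul_pow_sq_mem (hgen (by simp)) (hgen (by simp)) (hgen (by simp))
      (hc 1) r
  · exact hgen (by simp)
  · exact Subalgebra.add_smul_pow_mul_mem (hgen (by simp)) (hgen (by simp)) (hc 0) r
  · exact Subalgebra.add_smul_pow_mul_mem (hgen (by simp)) (hgen (by simp)) (hc 1) r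

end MvPolynomial

/-- Let `M ⊆ ℤ₊³` be the monoid generated by `t₁², t₂², t₃², t₁t₃, t₂t₃`, and for
integers `k₁, k₂ > 1` set `c j = 2 * k j - 1`.  The `R`-algebra automorphism `η` of
`R[t₁,t₂,t₃]` given by `t_j ↦ t_j + t₃ ^ (c j)` (`j = 1,2`), `t₃ ↦ t₃`, with inverse
`η'` given by `t_j ↦ t_j - t₃ ^ (c j)`, restricts to an automorphism of `R[M]`. -/
theorem stmt7 (R : Type*) [CommRing R] (c k : Fin 2 → ℕ) (hk : ∀ j, 1 < k j)
    (hc : ∀ j, c j = 2 * k j - 1)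
    (M : AddSubmonoid ((Fin 3) →₀ ℕ))
    (hM : M = AddSubmonoid.closure
      {Finsupp.single 0 2, Finsupp.single 1 2, Finsupp.single 2 2,
       Finsupp.single 0 1 + Finsupp.single 2 1,
       Finsupp.single 1 1 + Finsupp.single 2 1})
    (RM : Submodule R (MvPolynomial (Fin 3) R))
    (hRM : RM = Submodule.span R
      {p : MvPolynomial (Fin 3) R | ∃ v ∈ M, p = monomial v (1 : R)})
    (η η' : MvPolynomial (Fin 3) R →ₐ[R] MvPolynomial (Fin 3) R)
    (hη : η = aeval (fun i : Fin 3 => if h : (i : ℕ) < 2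
      then X i + (X 2 : MvPolynomial (Fin 3) R) ^ (c ⟨i, h⟩) else X i))
    (hη' : η' = aeval (fun i : Fin 3 => if h : (i : ℕ) < 2
      then X i - (X 2 : MvPolynomial (Fin 3) R) ^ (c ⟨i, h⟩) else X i)) :
    η'.comp η = AlgHom.id R _ ∧ η.comp η' = AlgHom.id R _ ∧
    (∀ p ∈ RM, η p ∈ RM) ∧ (∀ p ∈ RM, η' p ∈ RM) := by
  have hodd (j : Fin 2) : Odd (c j) := ⟨k j - 1, by have := hk j; have := hc j; omega⟩
  replace hη : η = aeval (triangularSubst 1 c) := by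
    rw [hη]; unfold triangularSubst; simp only [one_smul]
  replace hη' : η' = aeval (triangularSubst (-1) c) := by
    rw [hη']; unfold triangularSubst; simp only [neg_smul, one_smul, sub_eq_add_neg]
  rw [hRM, hM, span_monomial_one_eq_monomialSubalgebra, hη, hη']
  refine ⟨aeval_triangularSubst_neg_comp 1 c, ?_, fun p => aeval_triangularSubst_mem 1 hodd,
    fun p => aeval_triangularSubst_mem (-1) hodd⟩
  simpa using aeval_triangularSubst_neg_comp (-1 : R) c
end

section
/- Let A be a commutative ring such that every finitely generated projective A-module of rank ≥ d+1 has a unimodular element, and such that Aᵐ is cancellative (A ⊕ Q ≅ A ⊕ Q' with Q, Q' of rank m−1 implies Q ≅ Q') for all m ≥ d+1. Then every finitely generated projective A-module P of constant rank r ≥ d+1 can be generated by r + d elements. -/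
/-!
Write `Q × P ≅ Aⁿ` with `Q` finitely generated projective. If `n ≤ r + d`, then `P`, a quotient
of `Aⁿ`, is generated by `r + d` elements. Otherwise `Q` has rank `n - r ≥ d + 1`, so a unimodular
element splits `Q ≅ K × A`; then `A × (K × P) ≅ A × Aⁿ⁻¹`, and cancellation gives `K × P ≅ Aⁿ⁻¹`,
so we conclude by induction on `n`.
-/

/-- A finitely generated projective module `P` over `A` has (constant) rank `r` if its
localization at every prime ideal is free of rank `r`. -/
def HasConstRank (A : Type*) [CommRing A] (P : Type*) [AddCommGroup P] [Module A P]
    (r : ℕ) : Prop :=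
  ∀ p : PrimeSpectrum A, Nonempty
    (Module.Basis (Fin r) (Localization.AtPrime p.asIdeal)
      (LocalizedModule p.asIdeal.primeCompl P))

open Module LinearMap

section LinearAlgebra

variable {A M N : Type*} [CommRing A] [AddCommGroup M] [Module A M] [AddCommGroup N] [Module A N]

noncomputable def LinearMap.equivKerProdOfCompEqId (π : M →ₗ[A] N) {σ : N →ₗ[A] M}
    (h : π ∘ₗ σ = .id) : M ≃ₗ[A] ker π × N :=
  ((exact_subtype_ker_map π).splitSurjectiveEquiv (Submodule.injective_subtype _) ⟨σ, h⟩).1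

variable {π : M →ₗ[A] N} {σ : N →ₗ[A] M}

theorem Module.Finite.ker_of_comp_eq_id [Module.Finite A M] (h : π ∘ₗ σ = .id) :
    Module.Finite A (ker π) :=
  .of_surjective (fst A _ N ∘ₗ (π.equivKerProdOfCompEqId h).toLinearMap)
    (Prod.fst_surjective.comp (LinearEquiv.surjective _))

theorem Module.Projective.ker_of_comp_eq_id [Projective A M] (h : π ∘ₗ σ = .id) :
    Projective A (ker π) :=
  .of_split ((π.equivKerProdOfCompEqId h).symm.toLinearMap ∘ₗ inl A _ N)
    (fst A _ N ∘ₗ (π.equivKerProdOfCompEqId h).toLinearMap) (by ext; simp)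

theorem LinearMap.comp_toSpanSingleton_of_apply_eq_one {φ : M →ₗ[A] A} {q : M} (hq : φ q = 1) :
    φ ∘ₗ toSpanSingleton A M q = .id :=
  ext_ring (by simpa using hq)

theorem exists_finset_card_le_span_eq_top_of_surjective {n : ℕ} (f : (Fin n → A) →ₗ[A] M)
    (hf : Function.Surjective f) :
    ∃ s : Finset M, s.card ≤ n ∧ Submodule.span A (s : Set M) = ⊤ := by
  classical
  refine ⟨Finset.univ.image (f ∘ Pi.basisFun A (Fin n)),
    Finset.card_image_le.trans (by simp), ?_⟩
  rw [Finset.coe_image, Finset.coe_univ, Set.image_univ, Set.range_comp, Submodule.span_image,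
    (Pi.basisFun A (Fin n)).span_eq, Submodule.map_top, range_eq_top.mpr hf]

end LinearAlgebra

section Rank

variable {A M : Type*} [CommRing A] [AddCommGroup M] [Module A M]

theorem hasConstRank_iff_rankAtStalk_eq [Module.Finite A M] [Module.Flat A M] {r : ℕ} :
    HasConstRank A M r ↔ rankAtStalk (R := A) M = r := by
  refine ⟨fun h => funext fun p => ?_, fun h p => ?_⟩
  · obtain ⟨b⟩ := h p
    simp [rankAtStalk, finrank_eq_card_basis b]
  · have : Free (Localization.AtPrime p.asIdeal) (LocalizedModule p.asIdeal.primeCompl M) :=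
      free_of_flat_of_isLocalRing
    exact ⟨finBasisOfFinrankEq _ _ (congrFun h p)⟩

theorem rankAtStalk_fin_fun (n : ℕ) : rankAtStalk (R := A) (Fin n → A) = n := by
  ext p
  have : Nontrivial A := PrimeSpectrum.nonempty_iff_nontrivial.mp ⟨p⟩
  simp

theorem rankAtStalk_eq_of_prod_equiv_prod {N N' : Type*} [AddCommGroup N] [Module A N]
    [AddCommGroup N'] [Module A N'] [Module.Finite A M] [Module.Flat A M] [Module.Finite A N]
    [Module.Flat A N] [Module.Finite A N'] [Module.Flat A N'] (e : (M × N) ≃ₗ[A] M × N') :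
    rankAtStalk (R := A) N = rankAtStalk N' := by
  have := rankAtStalk_eq_of_equiv e
  rw [rankAtStalk_prod, rankAtStalk_prod] at this
  exact add_left_cancel this

end Rank

def HasUnimodularAboveRank (A : Type) [CommRing A] (d : ℕ) : Prop :=
  ∀ (P : Type) [AddCommGroup P] [Module A P],
    Module.Finite A P → Module.Projective A P →
    ∀ r : ℕ, d + 1 ≤ r → HasConstRank A P r →
    ∃ (p : P) (φ : P →ₗ[A] A), φ p = 1

def CancellativeAboveRank (A : Type) [CommRing A] (d : ℕ) : Prop :=
  ∀ m : ℕ, d + 1 ≤ m →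
    ∀ (Q Q' : Type) [AddCommGroup Q] [Module A Q] [AddCommGroup Q'] [Module A Q'],
    Module.Finite A Q → Module.Projective A Q →
    Module.Finite A Q' → Module.Projective A Q' →
    HasConstRank A Q (m - 1) → HasConstRank A Q' (m - 1) →
    Nonempty ((A × Q) ≃ₗ[A] (A × Q')) → Nonempty (Q ≃ₗ[A] Q')

section Generators

variable {A : Type} [CommRing A] {d : ℕ}
variable {P Q : Type} [AddCommGroup P] [Module A P] [Module.Finite A P] [Projective A P]
  [AddCommGroup Q] [Module A Q] [Module.Finite A Q] [Projective A Q]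

theorem exists_equiv_fin_fun_prod_of_apply_eq_one (hcan : CancellativeAboveRank A d) {n : ℕ}
    (hn : d ≤ n) (e : (Fin (n + 1) → A) ≃ₗ[A] Q × P) {φ : Q →ₗ[A] A} {q : Q} (hq : φ q = 1) :
    ∃ K : Submodule A Q, Module.Finite A K ∧ Projective A K ∧
      Nonempty ((Fin n → A) ≃ₗ[A] K × P) := by
  have hφ := LinearMap.comp_toSpanSingleton_of_apply_eq_one hq
  have := Module.Finite.ker_of_comp_eq_id hφ
  have := Module.Projective.ker_of_comp_eq_id hφ
  let E : (A × (ker φ × P)) ≃ₗ[A] A × (Fin n → A) :=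
    (LinearEquiv.prodAssoc A A (ker φ) P).symm ≪≫ₗ
      ((LinearEquiv.prodComm A A (ker φ)).prodCongr (.refl A P)) ≪≫ₗ
      ((φ.equivKerProdOfCompEqId hφ).symm.prodCongr (.refl A P)) ≪≫ₗ e.symm ≪≫ₗ
      (Fin.consLinearEquiv A fun _ => A).symm
  have hrank : rankAtStalk (R := A) (ker φ × P) = n :=
    (rankAtStalk_eq_of_prod_equiv_prod E).trans (rankAtStalk_fin_fun n)
  obtain ⟨e'⟩ := hcan (n + 1) (by omega) (ker φ × P) (Fin n → A) inferInstance inferInstance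
    inferInstance inferInstance (hasConstRank_iff_rankAtStalk_eq.mpr hrank)
    (hasConstRank_iff_rankAtStalk_eq.mpr (rankAtStalk_fin_fun n)) ⟨E⟩
  exact ⟨ker φ, ‹_›, ‹_›, ⟨e'.symm⟩⟩

theorem exists_finset_card_le_of_equiv_fin_fun_prod (hum : HasUnimodularAboveRank A d)
    (hcan : CancellativeAboveRank A d) {r : ℕ} (hP : rankAtStalk (R := A) P = r) {n : ℕ}
    (e : (Fin n → A) ≃ₗ[A] Q × P) :
    ∃ s : Finset P, s.card ≤ r + d ∧ Submodule.span A (s : Set P) = ⊤ := by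
  induction n using Nat.strong_induction_on generalizing Q with
  | _ n ih =>
  obtain hn | hn := le_or_gt n (r + d)
  · obtain ⟨s, hs, hspan⟩ := exists_finset_card_le_span_eq_top_of_surjective
      (snd A Q P ∘ₗ e.toLinearMap) (Prod.snd_surjective.comp e.surjective)
    exact ⟨s, hs.trans hn, hspan⟩
  obtain ⟨n, rfl⟩ : ∃ m, n = m + 1 := ⟨n - 1, by omega⟩
  have hQ : rankAtStalk (R := A) Q = (n + 1 - r : ℕ) := by
    have h := rankAtStalk_eq_of_equiv e
    rw [rankAtStalk_fin_fun, rankAtStalk_prod, hP] at h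
    funext p
    have := congrFun h p
    simp only [Pi.natCast_apply, Pi.add_apply, Nat.cast_id] at this ⊢
    omega
  obtain ⟨q, φ, hq⟩ := hum Q inferInstance inferInstance (n + 1 - r) (by omega)
    (hasConstRank_iff_rankAtStalk_eq.mpr hQ)
  obtain ⟨K, _, _, ⟨e'⟩⟩ := exists_equiv_fin_fun_prod_of_apply_eq_one hcan (by omega) e hq
  exact ih n n.lt_succ_self e'

end Generators

theorem stmt8_general (A : Type) [CommRing A] (d : ℕ)
    (hum : ∀ (P : Type) [AddCommGroup P] [Module A P],
      Module.Finite A P → Module.Projective A P →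
      ∀ r : ℕ, d + 1 ≤ r → HasConstRank A P r →
      ∃ (p : P) (φ : P →ₗ[A] A), φ p = 1)
    (hcan : ∀ m : ℕ, d + 1 ≤ m →
      ∀ (Q Q' : Type) [AddCommGroup Q] [Module A Q] [AddCommGroup Q'] [Module A Q'],
      Module.Finite A Q → Module.Projective A Q →
      Module.Finite A Q' → Module.Projective A Q' →
      HasConstRank A Q (m - 1) → HasConstRank A Q' (m - 1) →
      Nonempty ((A × Q) ≃ₗ[A] (A × Q')) → Nonempty (Q ≃ₗ[A] Q'))
    (P : Type) [AddCommGroup P] [Module A P]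
    (hPfin : Module.Finite A P) (hPproj : Module.Projective A P)
    (r : ℕ) (hrank : HasConstRank A P r) :
    ∃ s : Finset P, s.card ≤ r + d ∧ Submodule.span A (s : Set P) = ⊤ := by
  obtain ⟨n, f, g, -, -, hfg⟩ := Module.Finite.exists_comp_eq_id_of_projective A P
  have := Module.Finite.ker_of_comp_eq_id hfg
  have := Module.Projective.ker_of_comp_eq_id hfg
  exact exists_finset_card_le_of_equiv_fin_fun_prod hum hcan
    (hasConstRank_iff_rankAtStalk_eq.mp hrank) (f.equivKerProdOfCompEqId hfg)

/-- If every f.g. projective `A`-module of rank `≥ d + 1` has a unimodular element and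
`Aᵐ` is cancellative for all `m ≥ d + 1` (i.e. `A ⊕ Q ≅ A ⊕ Q'` with `Q, Q'` of rank
`m - 1` implies `Q ≅ Q'`), then every f.g. projective `A`-module of constant rank
`r ≥ d + 1` is generated by `r + d` elements. -/
theorem stmt8 (A : Type) [CommRing A] [IsNoetherianRing A] (d : ℕ)
    (hum : ∀ (P : Type) [AddCommGroup P] [Module A P],
      Module.Finite A P → Module.Projective A P →
      ∀ r : ℕ, d + 1 ≤ r → HasConstRank A P r →
      ∃ (p : P) (φ : P →ₗ[A] A), φ p = 1)
    (hcan : ∀ m : ℕ, d + 1 ≤ m →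
      ∀ (Q Q' : Type) [AddCommGroup Q] [Module A Q] [AddCommGroup Q'] [Module A Q'],
      Module.Finite A Q → Module.Projective A Q →
      Module.Finite A Q' → Module.Projective A Q' →
      HasConstRank A Q (m - 1) → HasConstRank A Q' (m - 1) →
      Nonempty ((A × Q) ≃ₗ[A] (A × Q')) → Nonempty (Q ≃ₗ[A] Q'))
    (P : Type) [AddCommGroup P] [Module A P]
    (hPfin : Module.Finite A P) (hPproj : Module.Projective A P)
    (r : ℕ) (hr : d + 1 ≤ r) (hrank : HasConstRank A P r) :
    ∃ s : Finset P, s.card ≤ r + d ∧ Submodule.span A (s : Set P) = ⊤ :=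
  stmt8_general A d hum hcan P hPfin hPproj r hrank
end

section
/- Let A be a commutative ring, N its nilradical, and σ ∈ SL_n(A) a matrix congruent to the identity modulo N. Then σ ∈ E_n(A), the subgroup generated by elementary matrices. -/
/-!
Nilpotent elements lie in the Jacobson radical, so it suffices to treat `σ ≡ 1` modulo an ideal
`I ⊆ J(A)`. Then every square matrix `D ≡ 1 mod I` is invertible, and block Gaussian elimination
with `D` as pivot splits off the Schur complement, which is again `≡ 1 mod I`; the unipotent
block-triangular factors are products of transvections. By induction `σ = L * diagonal d * U`
with `L, U ∈ E_n(A)`, hence `∏ d = det σ = 1`, and such a diagonal matrix is a product of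
Whitehead matrices `diag(u, u⁻¹)`, each a product of six transvections.
-/

open Matrix

/-- A matrix lies in `E_n(A)`, the subgroup generated by elementary matrices, iff it
is a product of transvections. -/
def IsElementary {n : ℕ} {A : Type*} [CommRing A] (σ : Matrix (Fin n) (Fin n) A) : Prop :=
  ∃ L : List (TransvectionStruct (Fin n) A), σ = (L.map TransvectionStruct.toMatrix).prod

namespace Matrix

variable {R : Type*} [CommRing R]

variable (R) in
/-- `E(ι, R)`. Taken as a submonoid: it is already a group, since the inverse of a transvection is
a transvection. -/
def elementarySubmonoid (ι : Type*) [Fintype ι] [DecidableEq ι] : Submonoid (Matrix ι ι R) :=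
  Submonoid.closure (Set.range TransvectionStruct.toMatrix)

section Elementary

variable {ι κ : Type*} [Fintype ι] [DecidableEq ι] [Fintype κ] [DecidableEq κ]

theorem transvection_mem_elementarySubmonoid {i j : ι} (hij : i ≠ j) (c : R) :
    transvection i j c ∈ elementarySubmonoid R ι :=
  Submonoid.subset_closure ⟨⟨i, j, hij, c⟩, rfl⟩

theorem det_eq_one_of_mem_elementarySubmonoid {M : Matrix ι ι R}
    (hM : M ∈ elementarySubmonoid R ι) : M.det = 1 := by
  induction hM using Submonoid.closure_induction with
  | mem _ h => obtain ⟨t, rfl⟩ := h; exact det_transvection_of_ne _ _ t.hij _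
  | one => exact det_one
  | mul _ _ _ _ hM hN => rw [det_mul, hM, hN, mul_one]

theorem reindexAlgEquiv_mem_elementarySubmonoid (e : ι ≃ κ) {M : Matrix ι ι R}
    (hM : M ∈ elementarySubmonoid R ι) : reindexAlgEquiv R R e M ∈ elementarySubmonoid R κ := by
  induction hM using Submonoid.closure_induction with
  | mem _ h =>
    obtain ⟨t, rfl⟩ := h
    exact Submonoid.subset_closure ⟨t.reindexEquiv e, t.toMatrix_reindexEquiv e⟩
  | one => rw [map_one]; exact one_mem _
  | mul _ _ _ _ hM hN => rw [map_mul]; exact mul_mem hM hN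

theorem diagonal_mulSingle_mul_mulSingle_inv_mem_elementarySubmonoid {i j : ι} (hij : i ≠ j)
    (u : Rˣ) :
    diagonal (Pi.mulSingle i (u : R) * Pi.mulSingle j ((u⁻¹ : Rˣ) : R)) ∈
      elementarySubmonoid R ι := by
  -- Whitehead: `w(u) := t_ij(u) t_ji(-u⁻¹) t_ij(u)` sends `e_j ↦ u e_i`, `e_i ↦ -u⁻¹ e_j`,
  -- and `w(u) w(-1) = diag(u, u⁻¹)`.
  have hwhitehead : diagonal (Pi.mulSingle i (u : R) * Pi.mulSingle j ((u⁻¹ : Rˣ) : R)) =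
      transvection i j (u : R) * transvection j i (-((u⁻¹ : Rˣ) : R)) * transvection i j (u : R) *
        transvection i j (-1) * transvection j i 1 * transvection i j (-1) := by
    -- with a trailing `* 1`, every factor is evaluated by a row-operation lemma
    rw [← mul_one (_ * transvection i j (-1 : R))]
    ext a b
    simp only [mul_assoc]
    have trichotomy (x : ι) : x = i ∨ x = j ∨ (x ≠ i ∧ x ≠ j ∧ i ≠ x ∧ j ≠ x) := by tauto
    rcases trichotomy a with rfl | rfl | ⟨hai, haj, hai', haj'⟩ <;>
      simp only [transvection_mul_apply_same, transvection_mul_apply_of_ne, ne_eq, hij.symm,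
        not_false_eq_true, *] <;>
      rcases trichotomy b with rfl | rfl | ⟨hbi, hbj, hbi', hbj'⟩ <;>
      simp [diagonal_apply, one_apply, hij.symm, *]
  have htij := transvection_mem_elementarySubmonoid (R := R) hij
  have htji := transvection_mem_elementarySubmonoid (R := R) hij.symm
  rw [hwhitehead]
  exact mul_mem (mul_mem (mul_mem (mul_mem (mul_mem (htij _) (htji _)) (htij _)) (htij _))
    (htji _)) (htij _)

theorem diagonal_mem_elementarySubmonoid {d : ι → R} (hd : ∏ i, d i = 1) :
    diagonal d ∈ elementarySubmonoid R ι := by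
  rcases isEmpty_or_nonempty ι with hι | ⟨⟨k⟩⟩
  · simp [Subsingleton.elim (diagonal d) 1, one_mem]
  obtain ⟨v, rfl⟩ : ∃ v : ι → Rˣ, (fun i => (v i : R)) = d :=
    ⟨fun i => (isUnit_of_dvd_one (hd ▸ Finset.dvd_prod_of_mem d (Finset.mem_univ i))).unit, rfl⟩
  have hv : ∏ i, (((v i)⁻¹ : Rˣ) : R) = 1 := by
    have : ∏ i, v i = 1 := Units.ext (by simpa using hd)
    rw [← Units.coe_prod, Finset.prod_inv_distrib, this, inv_one, Units.val_one]
  have hprod : (fun i => (v i : R)) =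
      ∏ i, (Pi.mulSingle i (v i : R) * Pi.mulSingle k (((v i)⁻¹ : Rˣ) : R)) := by
    funext j
    rw [Finset.prod_apply]
    simp only [Pi.mul_apply, Pi.mulSingle_apply, Finset.prod_mul_distrib, Finset.prod_ite_eq,
      Finset.mem_univ, if_true]
    split_ifs with hjk
    · rw [hv, mul_one]
    · simp
  rw [hprod]
  refine ((elementarySubmonoid R ι).comap (diagonalRingHom ι R : (ι → R) →* Matrix ι ι R)).prod_mem
    fun i _ => ?_
  rcases eq_or_ne i k with rfl | hik
  · simp [← Pi.mulSingle_mul, one_mem]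
  · exact diagonal_mulSingle_mul_mulSingle_inv_mem_elementarySubmonoid hik (v i)

end Elementary

section Blocks

variable {m n : Type*} [Fintype m] [DecidableEq m] [Fintype n] [DecidableEq n]

theorem fromBlocks_one_upper_mem_elementarySubmonoid (B : Matrix m n R) :
    fromBlocks 1 B 0 1 ∈ elementarySubmonoid R (m ⊕ n) := by
  let S : AddSubmonoid (Matrix m n R) :=
    { carrier := {X | fromBlocks 1 X 0 1 ∈ elementarySubmonoid R (m ⊕ n)}
      add_mem' := fun {X Y} (hX : fromBlocks 1 X 0 1 ∈ elementarySubmonoid R (m ⊕ n))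
          (hY : fromBlocks 1 Y 0 1 ∈ elementarySubmonoid R (m ⊕ n)) => by
        simpa [fromBlocks_multiply, add_comm] using mul_mem hX hY
      zero_mem' := by simp [one_mem] }
  have hsingle (i : m) (j : n) (c : R) :
      fromBlocks 1 (single i j c) 0 1 ∈ elementarySubmonoid R (m ⊕ n) := by
    have : fromBlocks 1 (single i j c) 0 1 = transvection (Sum.inl i) (Sum.inr j) c := by
      ext (a | a) (b | b) <;> simp [transvection, single, one_apply]
    rw [this]
    exact transvection_mem_elementarySubmonoid Sum.inl_ne_inr c
  rw [matrix_eq_sum_single B]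
  exact S.sum_mem fun i _ => S.sum_mem fun j _ => hsingle i j _

theorem fromBlocks_one_lower_mem_elementarySubmonoid (C : Matrix n m R) :
    fromBlocks 1 0 C 1 ∈ elementarySubmonoid R (m ⊕ n) := by
  simpa [coe_reindexAlgEquiv, reindex_apply, fromBlocks_submatrix_sum_swap_sum_swap] using
    reindexAlgEquiv_mem_elementarySubmonoid (Equiv.sumComm n m)
      (fromBlocks_one_upper_mem_elementarySubmonoid C)

theorem fromBlocks_mem_elementarySubmonoid {E : Matrix m m R}
    (hE : E ∈ elementarySubmonoid R m) :
    fromBlocks E 0 0 (1 : Matrix n n R) ∈ elementarySubmonoid R (m ⊕ n) := by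
  induction hE using Submonoid.closure_induction with
  | mem _ h =>
    obtain ⟨t, rfl⟩ := h
    exact Submonoid.subset_closure ⟨t.sumInl n, t.toMatrix_sumInl n⟩
  | one => simp [one_mem]
  | mul _ _ _ _ hM hN => simpa [fromBlocks_multiply] using mul_mem hM hN

theorem exists_eq_mul_fromBlocks_mul {I : Ideal R} (hI : I ≤ Ideal.jacobson ⊥)
    (M : Matrix (m ⊕ n) (m ⊕ n) R) (hM : M.map (Ideal.Quotient.mk I) = 1) :
    ∃ L ∈ elementarySubmonoid R (m ⊕ n), ∃ U ∈ elementarySubmonoid R (m ⊕ n),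
      ∃ S : Matrix m m R, S.map (Ideal.Quotient.mk I) = 1 ∧
        M = L * fromBlocks S 0 0 M.toBlocks₂₂ * U := by
  obtain ⟨hA, hB, -, hD⟩ : M.toBlocks₁₁.map (Ideal.Quotient.mk I) = 1 ∧
      M.toBlocks₁₂.map (Ideal.Quotient.mk I) = 0 ∧ M.toBlocks₂₁.map (Ideal.Quotient.mk I) = 0 ∧
      M.toBlocks₂₂.map (Ideal.Quotient.mk I) = 1 := by
    rwa [← fromBlocks_toBlocks M, fromBlocks_map, ← fromBlocks_one, fromBlocks_inj] at hM
  have hunit : IsUnit M.toBlocks₂₂ := by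
    refine (isUnit_iff_isUnit_det _).mpr (Ideal.isUnit_of_sub_one_mem_jacobson_bot _ (hI ?_))
    rw [← Ideal.Quotient.eq, RingHom.map_det, RingHom.mapMatrix_apply, hD, det_one, map_one]
  have := hunit.invertible
  refine ⟨_, fromBlocks_one_upper_mem_elementarySubmonoid _, _,
    fromBlocks_one_lower_mem_elementarySubmonoid _, _, ?_,
    (fromBlocks_toBlocks M).symm.trans (fromBlocks_eq_of_invertible₂₂ _ _ _ _)⟩
  simp [Matrix.map_sub, Matrix.map_mul, hA, hB]

end Blocks

theorem exists_eq_mul_diagonal_mul {I : Ideal R} (hI : I ≤ Ideal.jacobson ⊥) :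
    ∀ {n : ℕ} (M : Matrix (Fin n) (Fin n) R), M.map (Ideal.Quotient.mk I) = 1 →
      ∃ L ∈ elementarySubmonoid R (Fin n), ∃ U ∈ elementarySubmonoid R (Fin n),
        ∃ d : Fin n → R, M = L * diagonal d * U
  | 0, _, _ => ⟨1, one_mem _, 1, one_mem _, 0, Subsingleton.elim _ _⟩
  | n + 1, M, hM => by
    let f := reindexAlgEquiv R R (finSumFinEquiv : Fin n ⊕ Fin 1 ≃ Fin (n + 1))
    have hM' : (f.symm M).map (Ideal.Quotient.mk I) = 1 := by
      simp [f, coe_reindexAlgEquiv, reindex_apply, ← submatrix_map, hM]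
    obtain ⟨L, hL, U, hU, S, hS, hLU⟩ := exists_eq_mul_fromBlocks_mul hI _ hM'
    obtain ⟨L₀, hL₀, U₀, hU₀, d, rfl⟩ := exists_eq_mul_diagonal_mul hI S hS
    set c := (f.symm M).toBlocks₂₂ 0 0
    have hblock : fromBlocks (L₀ * diagonal d * U₀) 0 0 (f.symm M).toBlocks₂₂ =
        fromBlocks L₀ 0 0 1 * diagonal (Sum.elim d fun _ => c) * fromBlocks U₀ 0 0 1 := by
      have : (f.symm M).toBlocks₂₂ = diagonal fun _ => c := by
        ext i j; fin_cases i; fin_cases j; rfl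
      rw [this, ← fromBlocks_diagonal, fromBlocks_multiply, fromBlocks_multiply]
      simp
    have hdiag : diagonal (Sum.elim d (fun _ => c) ∘ finSumFinEquiv.symm) =
        f (diagonal (Sum.elim d fun _ => c)) := by
      simp [f, coe_reindexAlgEquiv, reindex_apply]
    refine ⟨f (L * fromBlocks L₀ 0 0 1), reindexAlgEquiv_mem_elementarySubmonoid _
      (mul_mem hL (fromBlocks_mem_elementarySubmonoid hL₀)), f (fromBlocks U₀ 0 0 1 * U),
      reindexAlgEquiv_mem_elementarySubmonoid _
      (mul_mem (fromBlocks_mem_elementarySubmonoid hU₀) hU),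
      Sum.elim d (fun _ => c) ∘ finSumFinEquiv.symm, ?_⟩
    rw [← f.apply_symm_apply M, hLU, hblock, hdiag, ← map_mul, ← map_mul]
    simp only [mul_assoc]

theorem mem_elementarySubmonoid_of_map_eq_one {I : Ideal R} (hI : I ≤ Ideal.jacobson ⊥)
    {n : ℕ} {M : Matrix (Fin n) (Fin n) R} (hM : M.map (Ideal.Quotient.mk I) = 1)
    (hdet : M.det = 1) : M ∈ elementarySubmonoid R (Fin n) := by
  obtain ⟨L, hL, U, hU, d, rfl⟩ := exists_eq_mul_diagonal_mul hI M hM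
  have hd : ∏ i, d i = 1 := by
    rwa [det_mul, det_mul, det_eq_one_of_mem_elementarySubmonoid hL,
      det_eq_one_of_mem_elementarySubmonoid hU, one_mul, mul_one, det_diagonal] at hdet
  exact mul_mem (mul_mem hL (diagonal_mem_elementarySubmonoid hd)) hU

end Matrix

theorem isElementary_of_mem_elementarySubmonoid {n : ℕ} {R : Type*} [CommRing R]
    {M : Matrix (Fin n) (Fin n) R} (hM : M ∈ elementarySubmonoid R (Fin n)) : IsElementary M := by
  induction hM using Submonoid.closure_induction with
  | mem _ h => obtain ⟨t, rfl⟩ := h; exact ⟨[t], by simp⟩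
  | one => exact ⟨[], rfl⟩
  | mul _ _ _ _ hM hN =>
    obtain ⟨L, rfl⟩ := hM
    obtain ⟨L', rfl⟩ := hN
    exact ⟨L ++ L', by simp⟩

/-- If `σ ∈ SL_n(A)` is congruent to the identity modulo the nilradical of `A`, then
`σ ∈ E_n(A)`. -/
theorem stmt10 (n : ℕ) (A : Type*) [CommRing A]
    (σ : Matrix (Fin n) (Fin n) A) (hdet : σ.det = 1)
    (hnil : ∀ i j, σ i j - (1 : Matrix (Fin n) (Fin n) A) i j ∈ nilradical A) :
    IsElementary σ := by
  have hσ : σ.map (Ideal.Quotient.mk (nilradical A)) = 1 := by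
    rw [← map_one (Ideal.Quotient.mk (nilradical A)).mapMatrix, RingHom.mapMatrix_apply]
    ext i j
    exact Ideal.Quotient.eq.mpr (hnil i j)
  exact isElementary_of_mem_elementarySubmonoid
    (mem_elementarySubmonoid_of_map_eq_one Ideal.radical_le_jacobson hσ hdet)
end

section
/- Let M ⊆ ℤ₊² be a nonzero submonoid such that the extension M ⊆ ℤ₊² is integral (every element of ℤ₊² has a positive multiple in M) and M is normal. Then M is isomorphic to a monoid of the form G ∩ ℤ₊², where G ⊆ ℤ² is the subgroup generated by (1,a₁) and (0,a₂) for some positive integers a₁ ≥ 0, a₂ ≥ 1. -/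
/-!
Let `G` be the group generated by `M`. Normality and integrality of `M ⊆ ℤ₊²` give
`M = G ∩ ℤ₊²`. Integrality also puts `(t, 0)` and `(0, s)` with `t, s > 0` into `G`, so `G` has
a triangular basis `(d₁, a), (0, d₂)` with `d₁, d₂ > 0` and `0 ≤ a` (Hermite normal form):
`d₁ ℤ` is the projection of `G` to the first coordinate and `d₂ ℤ` its intersection with the
second axis. Multiplying the first coordinate by `d₁` maps the group generated by `(1, a)` and
`(0, d₂)` isomorphically onto `G`, and a point is in `ℤ₊²` iff its image is, so this map
identifies the intersections of the two groups with `ℤ₊²`.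
-/

open AddSubgroup

theorem AddSubmonoid.eq_closure_inf_nonneg_of_normal {A : Type*} [AddCommGroup A]
    [PartialOrder A] [IsOrderedAddMonoid A] (M : AddSubmonoid A)
    (hpos : ∀ x ∈ M, 0 ≤ x) (hint : ∀ x : A, 0 ≤ x → ∃ t : ℕ, 0 < t ∧ t • x ∈ M)
    (hnormal : ∀ z : A, z ∈ AddSubgroup.closure (M : Set A) →
      (∃ t : ℕ, 0 < t ∧ t • z ∈ M) → z ∈ M) :
    M = (AddSubgroup.closure (M : Set A)).toAddSubmonoid ⊓ AddSubmonoid.nonneg A := by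
  ext z
  exact ⟨fun hz => ⟨AddSubgroup.subset_closure hz, hpos z hz⟩,
    fun ⟨hzG, hz⟩ => hnormal z hzG (hint z hz)⟩

namespace AddSubgroup

theorem eq_closure_pair_of_map_fst_of_comap_inr (G : AddSubgroup (ℤ × ℤ)) {d₁ d₂ : ℤ}
    (h₁ : G.map (AddMonoidHom.fst ℤ ℤ) = zmultiples d₁)
    (h₂ : G.comap (AddMonoidHom.inr ℤ ℤ) = zmultiples d₂)
    {w : ℤ × ℤ} (hw : w ∈ G) (hw₁ : w.1 = d₁) : G = closure {w, (0, d₂)} := by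
  have hd₂ : ((0 : ℤ), d₂) ∈ G := h₂.ge (mem_zmultiples d₂)
  refine le_antisymm (fun z hz => ?_) ((closure_le G).mpr (Set.pair_subset hw hd₂))
  obtain ⟨k, hk : k • d₁ = z.1⟩ := mem_zmultiples_iff.mp (h₁.le (mem_map_of_mem _ hz))
  have hzk : ((0 : ℤ), (z - k • w).2) ∈ G := by
    convert sub_mem hz (zsmul_mem hw k) using 1
    ext <;> simp [← hk, hw₁]
  obtain ⟨m, hm⟩ := mem_zmultiples_iff.mp (h₂.le hzk)
  refine mem_closure_pair.mpr ⟨k, m, ?_⟩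
  ext <;> simp [← hk, hw₁] at hm ⊢
  linarith

theorem exists_eq_closure_triangular (G : AddSubgroup (ℤ × ℤ)) {t s : ℤ} (ht : t ≠ 0)
    (hs : s ≠ 0) (htG : (t, 0) ∈ G) (hsG : (0, s) ∈ G) :
    ∃ d₁ a d₂ : ℕ, 0 < d₁ ∧ 0 < d₂ ∧ G = closure {((d₁ : ℤ), (a : ℤ)), (0, (d₂ : ℤ))} := by
  obtain ⟨g₁, hg₁⟩ := Int.subgroup_cyclic (G.map (AddMonoidHom.fst ℤ ℤ))
  obtain ⟨g₂, hg₂⟩ := Int.subgroup_cyclic (G.comap (AddMonoidHom.inr ℤ ℤ))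
  rw [← zmultiples_eq_closure, ← Int.zmultiples_natAbs] at hg₁ hg₂
  set d₁ := g₁.natAbs
  set d₂ := g₂.natAbs
  have hd₁ : 0 < d₁ := by
    have := Int.mem_zmultiples_iff.mp (hg₁.le (mem_map_of_mem _ htG))
    exact Int.natAbs_pos.mpr (by rintro rfl; simp_all)
  have hd₂ : 0 < d₂ := by
    have := Int.mem_zmultiples_iff.mp (hg₂.le hsG)
    exact Int.natAbs_pos.mpr (by rintro rfl; simp_all)
  obtain ⟨w, hw, hw₁⟩ := hg₁.ge (mem_zmultiples (d₁ : ℤ))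
  have hd₂G : ((0 : ℤ), (d₂ : ℤ)) ∈ G := hg₂.ge (mem_zmultiples _)
  -- reducing `w.2` modulo `d₂` makes the entry `a` a natural number
  set w' := w - (w.2 / d₂) • ((0 : ℤ), (d₂ : ℤ))
  have hw'₁ : w'.1 = d₁ := by simpa [w'] using hw₁
  have hw'₂ : w'.2 = ((w.2 % d₂).toNat : ℤ) := by
    rw [Int.toNat_of_nonneg (Int.emod_nonneg _ (by omega)), Int.emod_def]
    simp [w', mul_comm]
  refine ⟨d₁, (w.2 % d₂).toNat, d₂, hd₁, hd₂, ?_⟩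
  rw [← hw'₁, ← hw'₂]
  exact G.eq_closure_pair_of_map_fst_of_comap_inr hg₁ hg₂ (sub_mem hw (zsmul_mem hd₂G _))
    hw'₁

end AddSubgroup

def scaleFst (d : ℤ) : ℤ × ℤ →+ ℤ × ℤ :=
  (AddMonoidHom.mulLeft d).prodMap (AddMonoidHom.id ℤ)

@[simp]
theorem scaleFst_apply (d : ℤ) (z : ℤ × ℤ) : scaleFst d z = (d * z.1, z.2) := rfl

theorem scaleFst_injective {d : ℤ} (hd : d ≠ 0) : Function.Injective (scaleFst d) := by
  intro z z' h
  simp only [scaleFst_apply, Prod.mk.injEq] at h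
  exact Prod.ext (mul_left_cancel₀ hd h.1) h.2

theorem scaleFst_nonneg_iff {d : ℤ} (hd : 0 < d) {z : ℤ × ℤ} :
    0 ≤ scaleFst d z ↔ 0 ≤ z := by
  simp only [Prod.le_def, scaleFst_apply, Prod.fst_zero, Prod.snd_zero,
    mul_nonneg_iff_of_pos_left hd]

namespace AddSubgroup

theorem map_scaleFst_closure_pair (d a b : ℤ) :
    (closure {((1 : ℤ), a), (0, b)}).map (scaleFst d) = closure {(d, a), (0, b)} := by
  simp [AddMonoidHom.map_closure, Set.image_pair]

theorem map_scaleFst_inf_nonneg (H : AddSubgroup (ℤ × ℤ)) {d : ℤ} (hd : 0 < d) :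
    (H.toAddSubmonoid ⊓ AddSubmonoid.nonneg (ℤ × ℤ)).map (scaleFst d) =
      (H.map (scaleFst d)).toAddSubmonoid ⊓ AddSubmonoid.nonneg (ℤ × ℤ) := by
  ext z
  constructor
  · rintro ⟨y, ⟨hyH, hy⟩, rfl⟩
    exact ⟨mem_map_of_mem _ hyH, (scaleFst_nonneg_iff hd).mpr hy⟩
  · rintro ⟨⟨y, hyH, rfl⟩, hy⟩
    exact ⟨y, ⟨hyH, (scaleFst_nonneg_iff hd).mp hy⟩, rfl⟩

noncomputable def infNonnegEquivMapScaleFst (H : AddSubgroup (ℤ × ℤ)) {d : ℤ} (hd : 0 < d) :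
    (H.toAddSubmonoid ⊓ AddSubmonoid.nonneg (ℤ × ℤ) : AddSubmonoid (ℤ × ℤ)) ≃+
      ((H.map (scaleFst d)).toAddSubmonoid ⊓ AddSubmonoid.nonneg (ℤ × ℤ) :
        AddSubmonoid (ℤ × ℤ)) :=
  (AddSubmonoid.equivMapOfInjective _ _ (scaleFst_injective hd.ne')).trans
    (AddEquiv.addSubmonoidCongr (map_scaleFst_inf_nonneg H hd))

end AddSubgroup

theorem stmt12_general (M : AddSubmonoid (ℤ × ℤ))
    (hpos : ∀ x ∈ M, 0 ≤ x.1 ∧ 0 ≤ x.2)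
    (hint : ∀ x : ℤ × ℤ, 0 ≤ x.1 → 0 ≤ x.2 → ∃ t : ℕ, 0 < t ∧ t • x ∈ M)
    (hnormal : ∀ z : ℤ × ℤ, z ∈ AddSubgroup.closure (M : Set (ℤ × ℤ)) →
      (∃ t : ℕ, 0 < t ∧ t • z ∈ M) → z ∈ M) :
    ∃ (a₁ a₂ : ℕ), 1 ≤ a₂ ∧ Nonempty (M ≃+
      ((AddSubgroup.closure {((1 : ℤ), (a₁ : ℤ)), (0, (a₂ : ℤ))}).toAddSubmonoid ⊓
        AddSubmonoid.nonneg (ℤ × ℤ) : AddSubmonoid (ℤ × ℤ))) := by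
  have hM := M.eq_closure_inf_nonneg_of_normal (fun x hx => Prod.le_def.mpr (hpos x hx))
    (fun x hx => hint x hx.1 hx.2) hnormal
  obtain ⟨t, ht, htM⟩ := hint (1, 0) zero_le_one le_rfl
  obtain ⟨s, hs, hsM⟩ := hint (0, 1) le_rfl zero_le_one
  obtain ⟨d₁, a, d₂, hd₁, hd₂, hG⟩ :=
    exists_eq_closure_triangular (AddSubgroup.closure (M : Set (ℤ × ℤ))) (t := t) (s := s)
      (by omega) (by omega) (subset_closure (by simpa using htM))
      (subset_closure (by simpa using hsM))
  refine ⟨a, d₂, hd₂, ⟨(AddEquiv.addSubmonoidCongr hM).trans ?_⟩⟩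
  rw [hG, ← map_scaleFst_closure_pair]
  exact (infNonnegEquivMapScaleFst _ (by exact_mod_cast hd₁)).symm

/-- A nonzero normal submonoid `M ⊆ ℤ₊²` with `M ⊆ ℤ₊²` integral is isomorphic to
`G ∩ ℤ₊²` where `G ⊆ ℤ²` is the subgroup generated by `(1, a₁)` and `(0, a₂)` for
some integers `a₁ ≥ 0`, `a₂ ≥ 1`. -/
theorem stmt12 (M : AddSubmonoid (ℤ × ℤ))
    (hpos : ∀ x ∈ M, 0 ≤ x.1 ∧ 0 ≤ x.2)
    (hne : M ≠ ⊥)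
    (hint : ∀ x : ℤ × ℤ, 0 ≤ x.1 → 0 ≤ x.2 → ∃ t : ℕ, 0 < t ∧ t • x ∈ M)
    (hnormal : ∀ z : ℤ × ℤ, z ∈ AddSubgroup.closure (M : Set (ℤ × ℤ)) →
      (∃ t : ℕ, 0 < t ∧ t • z ∈ M) → z ∈ M) :
    ∃ (a₁ a₂ : ℕ), 1 ≤ a₂ ∧ Nonempty (M ≃+
      ((AddSubgroup.closure {((1 : ℤ), (a₁ : ℤ)), (0, (a₂ : ℤ))}).toAddSubmonoid ⊓
        AddSubmonoid.nonneg (ℤ × ℤ) : AddSubmonoid (ℤ × ℤ))) :=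
  stmt12_general M hpos hint hnormal
end

section
/- Let A = ⊕_{i≥0} A_i be a positively graded commutative ring with A₀ = R, let Q be a finitely generated A-module, s ∈ R, and p ∈ Q an element such that the order ideal O_Q(p) satisfies O_Q(p) + sA₊ = A, where A₊ = ⊕_{i≥1} A_i. If moreover A/O_Q(p) is integral over R/(R ∩ O_Q(p)) and Q_s is free, then there exists p' ∈ Q with p' − p ∈ sA₊Q and p' unimodular in Q. -/
/-!
Write `1 = e + s v` with `e ∈ O(p)` and `v ∈ A₊`. Since `A / O(p)` is integral over `R`, the
inverse of `s` modulo `O(p)` can be taken of degree `0`: `y = 1 - s w ∈ O(p)` with `w ∈ R`.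

Over `A_s` the order ideal of an element is generated by its coordinates in a basis of `Q_s`,
and since `Q` is finitely presented, order ideals commute with inverting `s`. Let `x_i` be
numerators of the coordinates of `p`. The ring endomorphism `T_c : ∑ aᵢ ↦ ∑ aᵢ cⁱ` fixes
`R` and moves every element by a multiple of `(1 - c) A₊`; for `c = 1 - (s w)^N` with `N`
large the `T_c x_i` are therefore numerators of the coordinates of some `p' ∈ p + s A₊ Q`.
Applying `T_c` to a relation `s^k y ∈ (x_i)` shows `y ∈ O(p')_s`; applying `T_0` (the
projection to degree `0`), which agrees with `T_c` modulo `c ∈ y A`, to `s^k e ∈ (x_i)` gives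
`s^k ∈ (T_c x_i, y)`. So `O(p')_s = A_s`, while `O(p') + s A ⊇ O(p) + s A₊ = A`; together
these force `O(p') = A`.
-/

open Set Pointwise HomogeneousIdeal Polynomial

theorem RingHom.IsIntegralElem.exists_mul_eq_one {R B : Type*} [CommRing R] [CommRing B]
    {f : R →+* B} {r : R} {v : B} (hv : f.IsIntegralElem v) (hrv : f r * v = 1) :
    ∃ w, f r * f w = 1 := by
  obtain ⟨P, hmonic, hP⟩ := hv
  let _ : Invertible v := ⟨f r, hrv, by rw [mul_comm, hrv]⟩
  have hrev : f (P.reverse.eval r) = 0 := by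
    rw [← eval₂_at_apply]
    exact (eval₂_reverse_eq_zero_iff f v P).mpr hP
  obtain ⟨T, hT⟩ := X_dvd_sub_C (p := P.reverse)
  rw [coeff_zero_reverse, hmonic.leadingCoeff, sub_eq_iff_eq_add] at hT
  refine ⟨-T.eval r, ?_⟩
  rw [hT, eval_add, eval_mul, eval_X, eval_C, map_add, map_mul, map_one] at hrev
  rw [map_neg, mul_neg]
  linear_combination -hrev

section OrderIdeal

variable {R M : Type*} [CommRing R] [AddCommGroup M] [Module R M]

variable (R) in
def orderIdeal (m : M) : Ideal R :=
  LinearMap.range (Module.Dual.eval R M m)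

theorem coe_orderIdeal (m : M) :
    (orderIdeal R m : Set R) = {a | ∃ φ : M →ₗ[R] R, φ m = a} :=
  rfl

theorem orderIdeal_le_sup_of_sub_mem {m m' : M} {I : Ideal R}
    (h : m' - m ∈ I • (⊤ : Submodule R M)) : orderIdeal R m ≤ orderIdeal R m' ⊔ I := by
  rintro _ ⟨φ : M →ₗ[R] R, rfl⟩
  have hφ : I • (⊤ : Submodule R M) ≤ Submodule.comap φ I :=
    Submodule.smul_le.mpr fun r hr n _ => by simpa using I.mul_mem_right (φ n) hr
  have : φ m = φ m' - φ (m' - m) := by simp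
  change φ m ∈ _
  rw [this]
  exact Submodule.sub_mem_sup ⟨φ, rfl⟩ (hφ h)

theorem orderIdeal_sup_span_eq_top_of_sub_mem {m m' : M} {s : R} {K : Ideal R}
    (hm : orderIdeal R m ⊔ Ideal.span {s} * K = ⊤)
    (h : m' - m ∈ (Ideal.span {s} * K) • (⊤ : Submodule R M)) :
    orderIdeal R m' ⊔ Ideal.span {s} = ⊤ := by
  rw [_root_.eq_top_iff, ← hm]
  refine sup_le ((orderIdeal_le_sup_of_sub_mem h).trans (sup_le_sup_left Ideal.mul_le_left _)) ?_
  exact Ideal.mul_le_left.trans le_sup_right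

theorem orderIdeal_eq_span_range_repr {ι : Type*} (b : Module.Basis ι R M) (m : M) :
    orderIdeal R m = Ideal.span (range (b.repr m)) := by
  refine le_antisymm ?_ (Ideal.span_le.mpr ?_)
  · rintro _ ⟨φ : M →ₗ[R] R, rfl⟩
    have : φ m = (b.repr m).sum fun i c => c * φ (b i) := by
      conv_lhs => rw [← b.linearCombination_repr m]
      simp [Finsupp.linearCombination_apply, map_finsuppSum]
    change φ m ∈ _
    rw [this]
    exact Ideal.sum_mem _ fun i _ => Ideal.mul_mem_right _ _ (Ideal.subset_span ⟨i, rfl⟩)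
  · rintro _ ⟨i, rfl⟩
    exact ⟨b.coord i, rfl⟩

end OrderIdeal

theorem Ideal.map_le_map_sup_of_forall_sub_mem {A A' : Type*} [CommRing A] [CommRing A']
    {g g' : A →+* A'} {K : Ideal A'} (h : ∀ a, g a - g' a ∈ K) (I : Ideal A) :
    I.map g ≤ I.map g' ⊔ K :=
  Ideal.map_le_iff_le_comap.mpr fun a ha => by
    simpa using Submodule.add_mem_sup (Ideal.mem_map_of_mem g' ha) (h a)

section Localization

variable {A B Q Q' : Type*} [CommRing A] [CommRing B] [Algebra A B]

section LocalizedModule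

variable (S : Submonoid A)
  [IsLocalization S B] [AddCommGroup Q] [Module A Q] [AddCommGroup Q'] [Module A Q']
  [Module B Q'] [IsScalarTower A B Q'] (f : Q →ₗ[A] Q') [IsLocalizedModule S f]

include S in
theorem map_algebraMap_orderIdeal [Module.FinitePresentation A Q] (q : Q) :
    (orderIdeal A q).map (algebraMap A B) = orderIdeal B (f q) := by
  apply le_antisymm
  · rw [Ideal.map_le_iff_le_comap]
    rintro _ ⟨φ : Q →ₗ[A] A, rfl⟩
    exact ⟨(IsLocalizedModule.map S f (Algebra.linearMap A B) φ).extendScalarsOfIsLocalization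
      S B, by simp⟩
  · rintro _ ⟨ψ : Q' →ₗ[B] B, rfl⟩
    obtain ⟨φ, t, hφ⟩ := Module.FinitePresentation.exists_lift_of_isLocalizedModule S
      (Algebra.linearMap A B) (ψ.restrictScalars A ∘ₗ f)
    have hq : algebraMap A B (φ q) = algebraMap A B t * ψ (f q) := by
      simpa [Submonoid.smul_def, Algebra.smul_def] using LinearMap.congr_fun hφ q
    change ψ (f q) ∈ _
    rw [← Ideal.unit_mul_mem_iff_mem _ (IsLocalization.map_units B t), ← hq]
    exact Ideal.mem_map_of_mem _ ⟨φ, rfl⟩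

include S in
theorem map_orderIdeal_eq_map_span [Module.FinitePresentation A Q] {ι : Type*}
    (b : Module.Basis ι B Q') {q : Q} {x : ι → A} (t : S)
    (hx : ∀ i, algebraMap A B t * b.repr (f q) i = algebraMap A B (x i)) :
    (orderIdeal A q).map (algebraMap A B) = (Ideal.span (range x)).map (algebraMap A B) := by
  have hrange : range (algebraMap A B ∘ x) = algebraMap A B t • range (b.repr (f q)) := by
    rw [Set.smul_set_range]
    exact congrArg range (funext fun i => (hx i).symm)
  rw [map_algebraMap_orderIdeal S f, orderIdeal_eq_span_range_repr b, Ideal.map_span,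
    ← range_comp, hrange]
  exact (Submodule.span_smul_eq_of_isUnit _ _ (IsLocalization.map_units B t)).symm

include S f in
/-- The `x i` are numerators of the coordinates of `p` in `b`; moving `p` inside `t K Q` can change
them by any multiples of `m t` with coefficients in `K`. -/
theorem exists_map_orderIdeal_eq_map_span [Module.FinitePresentation A Q] {ι : Type*} [Fintype ι]
    (b : Module.Basis ι B Q') (p : Q) :
    ∃ (x : ι → A) (m : S),
      (orderIdeal A p).map (algebraMap A B) = (Ideal.span (range x)).map (algebraMap A B) ∧
      ∀ (t : A) (K : Ideal A) (a : ι → A), (∀ i, a i ∈ K) → ∃ p' : Q,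
        p' - p ∈ (Ideal.span {t} * K) • (⊤ : Submodule A Q) ∧
        (orderIdeal A p').map (algebraMap A B) =
          (Ideal.span (range fun i => x i - m * t * a i)).map (algebraMap A B) := by
  obtain ⟨m₁, hx⟩ := IsLocalization.exist_integer_multiples_of_finite S (b.repr (f p))
  obtain ⟨m₂, hq⟩ := IsLocalizedModule.exist_integer_multiples_of_finite S f b
  choose x hx using hx
  choose q hq using hq
  have hxm : ∀ i, algebraMap A B m₁ * b.repr (f p) i = algebraMap A B (x i) := fun i => by
    rw [hx i, Algebra.smul_def]
  refine ⟨x, m₁ * m₂, map_orderIdeal_eq_map_span S f b m₁ hxm, fun t K a ha =>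
    ⟨p - ∑ i, (t * a i) • q i, ?_, map_orderIdeal_eq_map_span S f b m₁ fun i => ?_⟩⟩
  · rw [sub_sub_cancel_left]
    refine neg_mem (Submodule.sum_mem _ fun i _ => Submodule.smul_mem_smul ?_ trivial)
    exact Ideal.mul_mem_mul (Ideal.mem_span_singleton_self t) (ha i)
  · have hcorr :
        f (∑ i, (t * a i) • q i) = ∑ i, algebraMap A B (m₂ * t * a i) • b i := by
      rw [map_sum]
      refine Finset.sum_congr rfl fun i _ => ?_
      rw [map_smul, hq, smul_smul, ← algebraMap_smul B (_ : A)]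
      ring_nf
    rw [map_sub, hcorr, map_sub, Finsupp.sub_apply, b.repr_sum_self, mul_sub, hxm, ← map_mul,
      ← map_sub]
    congr 1; push_cast; ring

end LocalizedModule

theorem algebraMap_apply_mem_map_map (S : Submonoid A) [IsLocalization S B] {g : A →+* A}
    (hg : ∀ m ∈ S, g m = m) {I : Ideal A} {a : A}
    (ha : algebraMap A B a ∈ I.map (algebraMap A B)) :
    algebraMap A B (g a) ∈ (I.map g).map (algebraMap A B) := by
  rw [IsLocalization.algebraMap_mem_map_algebraMap_iff S] at ha ⊢
  obtain ⟨m, hm, hma⟩ := ha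
  exact ⟨m, hm, by simpa [hg m hm] using Ideal.mem_map_of_mem g hma⟩

theorem Ideal.eq_top_of_sup_span_eq_top_of_map_eq_top (s : A) [IsLocalization.Away s B]
    {I : Ideal A} (hsup : I ⊔ Ideal.span {s} = ⊤) (hmap : I.map (algebraMap A B) = ⊤) :
    I = ⊤ := by
  obtain ⟨_, ⟨n, rfl⟩, hn⟩ := Set.not_disjoint_iff.mp fun hdisj =>
    (IsLocalization.map_algebraMap_ne_top_iff_disjoint (Submonoid.powers s) B I).mpr hdisj hmap
  have := Ideal.sup_pow_eq_top' (n := n) hsup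
  rwa [Ideal.span_singleton_pow, sup_eq_left.mpr ((Ideal.span_singleton_le_iff_mem I).mpr hn)]
    at this

end Localization

section GradedEval

variable {A : Type*} [CommRing A] (𝒜 : ℕ → AddSubgroup A) [GradedRing 𝒜]

/-- `∑ aᵢ ↦ ∑ aᵢ cⁱ`: evaluation at `c` of `∑ aᵢ Tⁱ ∈ A[T]`. -/
noncomputable def gradedEval (c : A) : A →+* A :=
  (DirectSum.toSemiring (fun i => (AddMonoidHom.mulRight (c ^ i)).comp (𝒜 i).subtype)
    (by simp) (fun x y => by simp [pow_add, mul_mul_mul_comm])).comp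
    (DirectSum.decomposeRingEquiv 𝒜 : A →+* DirectSum ℕ fun i => 𝒜 i)

variable {𝒜}

theorem gradedEval_of_mem (c : A) {i : ℕ} {a : A} (ha : a ∈ 𝒜 i) :
    gradedEval 𝒜 c a = a * c ^ i := by
  simp [gradedEval, DirectSum.decomposeRingEquiv, DirectSum.decompose_of_mem 𝒜 ha]

theorem gradedEval_of_mem_zero (c : A) {a : A} (ha : a ∈ 𝒜 0) : gradedEval 𝒜 c a = a := by
  rw [gradedEval_of_mem c ha, pow_zero, mul_one]

theorem gradedEval_one_apply (a : A) : gradedEval 𝒜 1 a = a := by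
  induction a using DirectSum.Decomposition.inductionOn 𝒜 with
  | zero => exact map_zero _
  | homogeneous a => rw [gradedEval_of_mem 1 a.2, one_pow, mul_one]
  | add a a' ha ha' => rw [map_add, ha, ha']

theorem gradedEval_zero : gradedEval 𝒜 0 = GradedRing.projZeroRingHom 𝒜 := by
  ext a
  induction a using DirectSum.Decomposition.inductionOn 𝒜 with
  | zero => simp
  | @homogeneous i a =>
    rw [gradedEval_of_mem 0 a.2, GradedRing.projZeroRingHom_apply]
    rcases Nat.eq_zero_or_pos i with rfl | hi
    · rw [DirectSum.decompose_of_mem_same 𝒜 a.2, pow_zero, mul_one]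
    · rw [DirectSum.decompose_of_mem_ne 𝒜 a.2 hi.ne', zero_pow hi.ne', mul_zero]
  | add a a' ha ha' => rw [map_add, map_add, ha, ha']

theorem gradedEval_sub_gradedEval_mem (c c' a : A) :
    gradedEval 𝒜 c a - gradedEval 𝒜 c' a ∈
      Ideal.span {c - c'} * (irrelevant 𝒜).toIdeal := by
  induction a using DirectSum.Decomposition.inductionOn 𝒜 with
  | zero => simp
  | @homogeneous i a =>
    rw [gradedEval_of_mem c a.2, gradedEval_of_mem c' a.2]
    rcases Nat.eq_zero_or_pos i with rfl | hi
    · simp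
    · rw [← mul_sub, ← Commute.geom_sum₂_mul (Commute.all c c'), mul_comm (Ideal.span _)]
      exact Ideal.mul_mem_mul (mem_irrelevant_of_mem 𝒜 hi a.2)
        (Ideal.mul_mem_left _ _ (Ideal.mem_span_singleton_self _))
  | add a a' ha ha' =>
    rw [map_add, map_add, add_sub_add_comm]
    exact add_mem ha ha'

end GradedEval

section Graded

variable {A : Type*} [CommRing A] {𝒜 : ℕ → AddSubgroup A} [GradedRing 𝒜]

theorem exists_mem_gradeZero_one_sub_mul_mem {O : Ideal A}
    (hint : ((Ideal.Quotient.mk O).comp (SetLike.GradeZero.subring 𝒜).subtype).IsIntegral)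
    {s v : A} (hs : s ∈ 𝒜 0) (hv : 1 - s * v ∈ O) : ∃ w ∈ 𝒜 0, 1 - s * w ∈ O := by
  have hsv : Ideal.Quotient.mk O s * Ideal.Quotient.mk O v = 1 := by
    rw [← map_mul, ← map_one (Ideal.Quotient.mk O), Ideal.Quotient.eq, ← neg_sub]
    exact neg_mem hv
  obtain ⟨w, hw⟩ := (hint (Ideal.Quotient.mk O v)).exists_mul_eq_one (r := ⟨s, hs⟩) hsv
  refine ⟨w, w.2, ?_⟩
  rw [← Ideal.Quotient.eq, map_one, map_mul]
  exact hw.symm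

variable {B : Type*} [CommRing B] [Algebra A B] (S : Submonoid A) [IsLocalization S B]

theorem map_algebraMap_eq_top_of_map_gradedEval
    (hS : S ≤ (SetLike.GradeZero.subring 𝒜).toSubmonoid) {I J K : Ideal A} {c e y : A}
    (hy : y ∈ 𝒜 0) (hyI : y ∈ I) (heI : e ∈ I)
    (he : 1 - e ∈ (irrelevant 𝒜).toIdeal) (hc : c ∈ Ideal.span {y})
    (hI : I.map (algebraMap A B) ≤ K.map (algebraMap A B))
    (hJ : J.map (algebraMap A B) = (K.map (gradedEval 𝒜 c)).map (algebraMap A B)) :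
    J.map (algebraMap A B) = ⊤ := by
  have hfix (c' : A) : ∀ m ∈ S, gradedEval 𝒜 c' m = m := fun m hm =>
    gradedEval_of_mem_zero c' (hS hm)
  have hyJ : algebraMap A B y ∈ J.map (algebraMap A B) := by
    rw [hJ, ← gradedEval_of_mem_zero c hy]
    exact algebraMap_apply_mem_map_map S (hfix c) (hI (Ideal.mem_map_of_mem _ hyI))
  have hK : K.map (gradedEval 𝒜 0) ≤ K.map (gradedEval 𝒜 c) ⊔ Ideal.span {y} := by
    refine Ideal.map_le_map_sup_of_forall_sub_mem (fun a => ?_) K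
    have := Ideal.mul_le_left (gradedEval_sub_gradedEval_mem (𝒜 := 𝒜) 0 c a)
    rw [zero_sub, Ideal.span_singleton_neg] at this
    exact Ideal.span_singleton_le_span_singleton.mpr (Ideal.mem_span_singleton.mp hc) this
  have he1 : gradedEval 𝒜 0 e = 1 := by
    rw [← sub_eq_zero, ← map_one (gradedEval 𝒜 0), ← map_sub, gradedEval_zero,
      ← RingHom.mem_ker, ← toIdeal_irrelevant, ← neg_sub]
    exact neg_mem he
  have hone := algebraMap_apply_mem_map_map S (hfix 0) (hI (Ideal.mem_map_of_mem _ heI))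
  rw [he1, map_one] at hone
  rw [Ideal.eq_top_iff_one]
  refine (Ideal.map_mono hK).trans ?_ hone
  rw [Ideal.map_sup, ← hJ, Ideal.map_span, Set.image_singleton]
  exact sup_le le_rfl ((Ideal.span_singleton_le_iff_mem _).mpr hyJ)

end Graded

/-- Lindel's lemma: let `A = ⊕_{i ≥ 0} 𝒜 i` be a positively graded ring with degree
zero part `R = 𝒜 0`, `Q` a finitely generated `A`-module, `s ∈ R` with `Q_s` free, and
`p ∈ Q` with order ideal `O` satisfying `O + sA₊ = A`.  If `A / O` is integral over
`R / (R ∩ O)`, then there is a unimodular `p' ∈ Q` with `p' - p ∈ sA₊Q`. -/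
theorem stmt14 (A : Type*) [CommRing A] [IsNoetherianRing A]
    (𝒜 : ℕ → AddSubgroup A) [GradedRing 𝒜]
    (Q : Type*) [AddCommGroup Q] [Module A Q] (hQfin : Module.Finite A Q)
    (s : A) (hs : s ∈ 𝒜 0)
    (hfree : Module.Free (Localization.Away s) (LocalizedModule (Submonoid.powers s) Q))
    (p : Q) (O Aplus : Ideal A)
    (hO : (O : Set A) = {x : A | ∃ φ : Q →ₗ[A] A, φ p = x})
    (hAplus : Aplus = Ideal.span (⋃ i ∈ {i : ℕ | 0 < i}, (𝒜 i : Set A)))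
    (hcomax : O ⊔ Ideal.span {s} * Aplus = ⊤)
    (hintegral : ((Ideal.Quotient.mk O).comp
      (SetLike.GradeZero.subring 𝒜).subtype).IsIntegral) :
    ∃ p' : Q, p' - p ∈ (Ideal.span {s} * Aplus) • (⊤ : Submodule A Q) ∧
      {x : A | ∃ φ : Q →ₗ[A] A, φ p' = x} = Set.univ := by
  obtain rfl : O = orderIdeal A p := SetLike.coe_injective hO
  obtain rfl : Aplus = (irrelevant 𝒜).toIdeal := hAplus.trans (irrelevant_eq_span 𝒜).symm
  obtain ⟨e, heO, _, ht, het⟩ :=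
    Submodule.mem_sup.mp (hcomax ▸ Submodule.mem_top (x := (1 : A)))
  obtain ⟨v, -, rfl⟩ := Ideal.mem_span_singleton_mul.mp ht
  obtain ⟨w, hw, hwO⟩ := exists_mem_gradeZero_one_sub_mul_mem hintegral hs
    (by rwa [← het, add_sub_cancel_right])
  have : Module.FinitePresentation A Q := Module.finitePresentation_of_finite A Q
  have : Module.Finite (Localization.Away s) (LocalizedModule (Submonoid.powers s) Q) :=
    Module.Finite.of_isLocalizedModule (Submonoid.powers s) (LocalizedModule.mkLinearMap _ Q)
  obtain ⟨x, ⟨_, n, rfl⟩, hpx, htwist⟩ :=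
    exists_map_orderIdeal_eq_map_span (Submonoid.powers s) (LocalizedModule.mkLinearMap _ Q)
    (Module.Free.chooseBasis (Localization.Away s) (LocalizedModule (Submonoid.powers s) Q)) p
  choose u hu huc using fun i => Ideal.mem_span_singleton_mul.mp
    (by simpa only [sub_sub_cancel, gradedEval_one_apply] using
      gradedEval_sub_gradedEval_mem (𝒜 := 𝒜) 1 (1 - (s * w) ^ (n + 1)) (x i))
  obtain ⟨p', hp'p, hp'⟩ := htwist s _ (fun i => w ^ (n + 1) * u i)
    fun i => Ideal.mul_mem_left _ _ (hu i)
  refine ⟨p', hp'p, ?_⟩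
  suffices orderIdeal A p' = ⊤ by rw [← coe_orderIdeal, this, Submodule.top_coe]
  refine Ideal.eq_top_of_sup_span_eq_top_of_map_eq_top s (B := Localization.Away s)
    (orderIdeal_sup_span_eq_top_of_sub_mem hcomax hp'p) ?_
  refine map_algebraMap_eq_top_of_map_gradedEval _ (Submonoid.powers_le.mpr hs)
    ((SetLike.GradeZero.subring 𝒜).sub_mem (one_mem _) (mul_mem hs hw)) hwO heO
    (by rw [← het, add_sub_cancel_left]; exact Ideal.mul_le_right ht)
    (Ideal.mem_span_singleton.mpr (one_sub_dvd_one_sub_pow _ (n + 1))) hpx.le ?_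
  rw [hp', Ideal.map_span (gradedEval 𝒜 _), ← range_comp]
  congr 3 with i
  rw [Function.comp_apply]
  linear_combination -huc i
end

section
/- Let R be a commutative ring, S ⊆ R a multiplicative set, P a finitely generated projective R-module, and s ∈ S. If s is nilpotent, then any unimodular element of P/sP lifts to a unimodular element of P. -/
/-- Let `s` be a nilpotent element of `R` and `P` a finitely generated projective
`R`-module.  Then every unimodular element of `P/sP` lifts to a unimodular element of
`P`: if `p ∈ P` admits `φ : P → R` with `φ p ≡ 1 mod (s)`, then there is `p' ∈ P` with
`p' - p ∈ sP` and `φ' p' = 1` for some `φ'`. -/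
theorem stmt15 (R : Type*) [CommRing R] (s : R) (hs : IsNilpotent s)
    (P : Type*) [AddCommGroup P] [Module R P]
    (hfin : Module.Finite R P) (hproj : Module.Projective R P)
    (p : P) (φ : P →ₗ[R] R) (hφ : φ p - 1 ∈ Ideal.span {s}) :
    ∃ p' : P, p' - p ∈ (Ideal.span {s} : Ideal R) • (⊤ : Submodule R P) ∧
      ∃ φ' : P →ₗ[R] R, φ' p' = 1 := by
  obtain ⟨c, hc⟩ := Ideal.mem_span_singleton'.mp hφ
  have hnil : IsNilpotent (c * s) := (Commute.all c s).isNilpotent_mul_left hs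
  have hu : IsUnit (φ p) := by
    have : φ p = 1 + c * s := by linear_combination -hc
    rw [this]
    exact hnil.isUnit_one_add
  refine ⟨p, by simp, (↑hu.unit⁻¹ : R) • φ, ?_⟩
  simp [IsUnit.val_inv_mul, hu.unit_spec]
end
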